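/- arXiv:1702.08546 — 5 statements merged into one kernel-verified Lean document; each statement's English description precedes it below -/
import Mathlib

section
/- Moment matching for the phase shift group: Fix 2 ≤ s ≤ ⌊L/2⌋ and let θ, φ ∈ ℝ^L satisfy θ̂_j = φ̂_j = 0 for all j ∉ {±(s−1), ±s} and |θ̂_j| = |φ̂_j| for j ∈ {±(s−1), ±s}. If G is drawn uniformly (Haar) from the phase shift group 𝒮, then for every m = 1, …, 2s−2, the m-th moment tensors agree: E[(Gθ)^{⊗m}] = E[(Gφ)^{⊗m}]. -/
open MeasureTheory Real Finset

noncomputable section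

/-- Euclidean norm on `Fin L → ℝ`. -/
def nrm {L : ℕ} (v : Fin L → ℝ) : ℝ := Real.sqrt (∑ i, v i ^ 2)

/-- Discrete Fourier transform coefficient `θ̂_j = L^{-1/2} ∑_k e^{2πijk/L} θ_k`. -/
def dft (L : ℕ) (θ : Fin L → ℝ) (j : ℤ) : ℂ :=
  ((Real.sqrt L : ℝ) : ℂ)⁻¹ *
    ∑ k : Fin L,
      Complex.exp (2 * (Real.pi : ℂ) * Complex.I * (j : ℂ) * ((k : ℕ) : ℂ) / (L : ℂ)) *
        ((θ k : ℝ) : ℂ)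

/-- The phase-shift action `G_z` for `z = exp(2πit)`: it acts in the Fourier domain by
`(G_z θ)^_j = z^j θ̂_j` for `|j| ≤ ⌊L/2⌋`, transported back to the time domain by the
inverse discrete Fourier transform (the result is real by conjugate symmetry). -/
def pact (L : ℕ) (t : ℝ) (θ : Fin L → ℝ) : Fin L → ℝ := fun k =>
  (((Real.sqrt L : ℝ) : ℂ)⁻¹ *
    ∑ j ∈ Finset.Icc (-((L : ℤ) / 2)) ((L : ℤ) / 2),
      Complex.exp (2 * (Real.pi : ℂ) * Complex.I * (t : ℂ) * (j : ℂ)) * dft L θ j *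
        Complex.exp (-(2 * (Real.pi : ℂ) * Complex.I * (j : ℂ) * ((k : ℕ) : ℂ)) / (L : ℂ))).re

/-- Gaussian density with covariance `σ² I_L`, evaluated at `v ∈ ℝ^L`. -/
def gaussDens (L : ℕ) (σ : ℝ) (v : Fin L → ℝ) : ℝ :=
  (2 * Real.pi * σ ^ 2) ^ (-(L : ℝ) / 2) * Real.exp (-(nrm v) ^ 2 / (2 * σ ^ 2))

/-- Lebesgue density of `P_θ`: Gaussian mixture over the uniform phase `z = e^{2πit}`,
`t` uniform on `[0,1]`. -/
def pdens (L : ℕ) (σ : ℝ) (θ y : Fin L → ℝ) : ℝ :=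
  ∫ t in (0:ℝ)..1, gaussDens L σ (y - pact L t θ)

/-- The law `P_θ` of `Y = G_z θ + σξ`, `z` uniform on `U(1)`, `ξ ~ N(0, I_L)` independent. -/
def pP (L : ℕ) (σ : ℝ) (θ : Fin L → ℝ) : Measure (Fin L → ℝ) :=
  volume.withDensity fun y => ENNReal.ofReal (pdens L σ θ y)

/-- Orbit distance `ρ(φ, θ) = min_{z ∈ U(1)} ‖φ - G_z θ‖`. -/
def prho (L : ℕ) (φ θ : Fin L → ℝ) : ℝ := ⨅ t : ℝ, nrm (φ - pact L t θ)

/-- The class `𝒯` (Assumptions 1 and 2). -/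
def Tset (L : ℕ) (c c₀ : ℝ) : Set (Fin L → ℝ) :=
  {θ | c⁻¹ ≤ nrm θ ∧ nrm θ ≤ c ∧
    ∀ j : ℤ, 1 ≤ j → j ≤ (L : ℤ) / 2 → dft L θ j ≠ 0 → c₀ ≤ ‖dft L θ j‖}

/-- The class `𝒯_s`: members of `𝒯` with positive Fourier support contained in `{1,…,s}`. -/
def TsSet (L : ℕ) (c c₀ : ℝ) (s : ℕ) : Set (Fin L → ℝ) :=
  {θ | θ ∈ Tset L c c₀ ∧
    ∀ j : ℤ, 1 ≤ j → j ≤ (L : ℤ) / 2 → dft L θ j ≠ 0 → j ≤ (s : ℤ)}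

lemma conj_dft (L : ℕ) (θ : Fin L → ℝ) (j : ℤ) :
    (starRingEnd ℂ) (dft L θ j) = dft L θ (-j) := by
  unfold dft
  rw [map_mul, map_sum, map_inv₀, Complex.conj_ofReal]
  congr 1
  refine Finset.sum_congr rfl fun k _ => ?_
  rw [map_mul, Complex.conj_ofReal, ← Complex.exp_conj]
  congr 2
  simp only [map_div₀, map_mul, Complex.conj_I, Complex.conj_ofReal, map_ofNat,
    map_intCast, map_natCast]
  push_cast
  ring

def pactC (L : ℕ) (t : ℝ) (θ : Fin L → ℝ) (k : Fin L) : ℂ :=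
  ((Real.sqrt L : ℝ) : ℂ)⁻¹ *
    ∑ j ∈ Finset.Icc (-((L : ℤ) / 2)) ((L : ℤ) / 2),
      Complex.exp (2 * (Real.pi : ℂ) * Complex.I * (t : ℂ) * (j : ℂ)) * dft L θ j *
        Complex.exp (-(2 * (Real.pi : ℂ) * Complex.I * (j : ℂ) * ((k : ℕ) : ℂ)) / (L : ℂ))

lemma conj_pactC (L : ℕ) (t : ℝ) (θ : Fin L → ℝ) (k : Fin L) :
    (starRingEnd ℂ) (pactC L t θ k) = pactC L t θ k := by
  unfold pactC
  rw [map_mul, map_sum, map_inv₀, Complex.conj_ofReal]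
  congr 1
  have himg : (Finset.Icc (-((L:ℤ)/2)) ((L:ℤ)/2)).image (fun j => -j)
      = Finset.Icc (-((L:ℤ)/2)) ((L:ℤ)/2) := by
    ext j
    simp only [Finset.mem_image, Finset.mem_Icc]
    constructor
    · rintro ⟨a, ⟨h1, h2⟩, rfl⟩; omega
    · intro h; exact ⟨-j, ⟨by omega, by omega⟩, by omega⟩
  have hterm : ∀ j ∈ Finset.Icc (-((L:ℤ)/2)) ((L:ℤ)/2),
      (starRingEnd ℂ) (Complex.exp (2 * (Real.pi : ℂ) * Complex.I * (t : ℂ) * (j : ℂ)) * dft L θ j *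
        Complex.exp (-(2 * (Real.pi : ℂ) * Complex.I * (j : ℂ) * ((k : ℕ) : ℂ)) / (L : ℂ)))
      = Complex.exp (2 * (Real.pi : ℂ) * Complex.I * (t : ℂ) * ((-j : ℤ) : ℂ)) * dft L θ (-j) *
        Complex.exp (-(2 * (Real.pi : ℂ) * Complex.I * ((-j : ℤ) : ℂ) * ((k : ℕ) : ℂ)) / (L : ℂ)) := by
    intro j _
    rw [map_mul, map_mul, conj_dft, ← Complex.exp_conj, ← Complex.exp_conj]
    congr 2
    · simp only [map_mul, Complex.conj_I, Complex.conj_ofReal, map_ofNat, map_intCast]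
      push_cast; ring_nf
    · simp only [map_div₀, map_neg, map_mul, Complex.conj_I, Complex.conj_ofReal, map_ofNat,
        map_intCast, map_natCast]
      push_cast; ring_nf
  rw [Finset.sum_congr rfl hterm]
  conv_rhs => rw [← himg]
  rw [Finset.sum_image (by intro x _ y _ h; exact neg_injective h)]

lemma integral_exp_int (n : ℤ) :
    (∫ t in (0:ℝ)..1, Complex.exp (2 * (Real.pi : ℂ) * Complex.I * (t : ℂ) * (n : ℂ)))
      = if n = 0 then 1 else 0 := by
  rcases eq_or_ne n 0 with rfl | hn
  · simp
  · rw [if_neg hn]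
    have hc : (2 * (Real.pi : ℂ) * Complex.I * (n : ℂ)) ≠ 0 := by
      simp [Real.pi_ne_zero, Complex.I_ne_zero, hn]
    have h1 : (fun t : ℝ => Complex.exp (2 * (Real.pi : ℂ) * Complex.I * (t : ℂ) * (n : ℂ)))
        = fun t : ℝ => Complex.exp ((2 * (Real.pi : ℂ) * Complex.I * (n : ℂ)) * (t : ℂ)) := by
      funext t; ring_nf
    rw [h1, integral_exp_mul_complex hc]
    have h2 : (2 * (Real.pi : ℂ) * Complex.I * (n : ℂ)) * ((1:ℝ) : ℂ)
        = (n : ℂ) * (2 * (Real.pi : ℂ) * Complex.I) := by push_cast; ring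
    rw [h2, Complex.exp_int_mul_two_pi_mul_I]
    simp

lemma prod_eq_pow {m : ℕ} (g : Fin m → ℤ) (valset : Finset ℤ)
    (hmem : ∀ i, g i ∈ valset) (f : ℤ → ℂ) :
    ∏ i, f (g i) = ∏ v ∈ valset, f v ^ (Finset.univ.filter fun i => g i = v).card := by
  rw [← Finset.prod_fiberwise_of_maps_to (fun i _ => hmem i) (fun i => f (g i))]
  refine Finset.prod_congr rfl fun v _ => ?_
  rw [Finset.prod_congr rfl (fun i hi => ?_), Finset.prod_const]
  exact congrArg f (Finset.mem_filter.mp hi).2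

lemma fiber_counts {m : ℕ} (s : ℕ) (hs2 : 2 ≤ s) (hm : m ≤ 2 * s - 2)
    (g : Fin m → ℤ)
    (hgS : ∀ i, g i ∈ ({(s:ℤ) - 1, -((s:ℤ) - 1), (s:ℤ), -(s:ℤ)} : Finset ℤ))
    (hsum : ∑ i, g i = 0) :
    (Finset.univ.filter fun i => g i = (s:ℤ) - 1).card
      = (Finset.univ.filter fun i => g i = -((s:ℤ) - 1)).card ∧
    (Finset.univ.filter fun i => g i = (s:ℤ)).card
      = (Finset.univ.filter fun i => g i = -(s:ℤ)).card := by
  classical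
  have hs2' : (2:ℤ) ≤ (s:ℤ) := by exact_mod_cast hs2
  set valset : Finset ℤ := {(s:ℤ) - 1, -((s:ℤ) - 1), (s:ℤ), -(s:ℤ)} with hvs
  set n1 := (Finset.univ.filter fun i => g i = (s:ℤ) - 1).card with hn1
  set n2 := (Finset.univ.filter fun i => g i = -((s:ℤ) - 1)).card with hn2
  set n3 := (Finset.univ.filter fun i => g i = (s:ℤ)).card with hn3
  set n4 := (Finset.univ.filter fun i => g i = -(s:ℤ)).card with hn4
  have hmemv : ∀ i ∈ (Finset.univ : Finset (Fin m)), g i ∈ valset := fun i _ => hgS i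
  -- card split
  have hcard : m = ∑ v ∈ valset, (Finset.univ.filter fun i => g i = v).card := by
    simpa using Finset.card_eq_sum_card_fiberwise hmemv
  -- sum split
  have hsum2 : ∑ v ∈ valset, ∑ i ∈ Finset.univ.filter fun i => g i = v, g i = 0 := by
    rw [Finset.sum_fiberwise_of_maps_to hmemv]; exact hsum
  have hinner : ∀ v : ℤ, ∑ i ∈ Finset.univ.filter fun i => g i = v, g i
      = ((Finset.univ.filter fun i => g i = v).card : ℤ) * v := by
    intro v
    rw [Finset.sum_congr rfl (fun i hi => (Finset.mem_filter.mp hi).2), Finset.sum_const]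
    simp [mul_comm]
  -- expand the 4-element set
  have hne12 : (s:ℤ) - 1 ≠ -((s:ℤ) - 1) := by omega
  have hne13 : (s:ℤ) - 1 ≠ (s:ℤ) := by omega
  have hne14 : (s:ℤ) - 1 ≠ -(s:ℤ) := by omega
  have hne23 : -((s:ℤ) - 1) ≠ (s:ℤ) := by omega
  have hne24 : -((s:ℤ) - 1) ≠ -(s:ℤ) := by omega
  have hne34 : (s:ℤ) ≠ -(s:ℤ) := by omega
  have hexpand : ∀ F : ℤ → ℕ, ∑ v ∈ valset, F v
      = F ((s:ℤ) - 1) + F (-((s:ℤ) - 1)) + F (s:ℤ) + F (-(s:ℤ)) := by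
    intro F
    rw [hvs]
    rw [Finset.sum_insert (by intro h; simp only [Finset.mem_insert, Finset.mem_singleton] at h; omega),
      Finset.sum_insert (by intro h; simp only [Finset.mem_insert, Finset.mem_singleton] at h; omega),
      Finset.sum_insert (by intro h; simp only [Finset.mem_singleton] at h; omega), Finset.sum_singleton]
    ring
  have hexpandZ : ∀ F : ℤ → ℤ, ∑ v ∈ valset, F v
      = F ((s:ℤ) - 1) + F (-((s:ℤ) - 1)) + F (s:ℤ) + F (-(s:ℤ)) := by
    intro F
    rw [hvs]
    rw [Finset.sum_insert (by intro h; simp only [Finset.mem_insert, Finset.mem_singleton] at h; omega),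
      Finset.sum_insert (by intro h; simp only [Finset.mem_insert, Finset.mem_singleton] at h; omega),
      Finset.sum_insert (by intro h; simp only [Finset.mem_singleton] at h; omega), Finset.sum_singleton]
    ring
  rw [hexpand] at hcard
  rw [Finset.sum_congr rfl (fun v _ => hinner v), hexpandZ] at hsum2
  -- now a linear-diophantine argument
  set a : ℤ := (n1:ℤ) - (n2:ℤ) with ha
  set b : ℤ := (n3:ℤ) - (n4:ℤ) with hb
  have hab : a * ((s:ℤ) - 1) + b * (s:ℤ) = 0 := by
    rw [ha, hb]; linarith [hsum2]
  have hdvd : (s:ℤ) ∣ a := by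
    have h1 : (s:ℤ) ∣ a * (s:ℤ) := Dvd.intro_left a rfl
    have h2 : (s:ℤ) ∣ a * ((s:ℤ) - 1) := ⟨-b, by linarith⟩
    have h3 : a * (s:ℤ) - a * ((s:ℤ) - 1) = a := by ring
    calc (s:ℤ) ∣ a * (s:ℤ) - a * ((s:ℤ) - 1) := dvd_sub h1 h2
      _ = a := h3
  obtain ⟨k, hk⟩ := hdvd
  rcases eq_or_ne k 0 with rfl | hk0
  · have ha0 : a = 0 := by omega
    have hb0 : b = 0 := by
      have hs0 : (s:ℤ) ≠ 0 := by omega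
      have : b * (s:ℤ) = 0 := by rw [ha0] at hab; linarith
      exact (mul_eq_zero.mp this).resolve_right hs0
    constructor <;> omega
  · exfalso
    have hbk : b = -(k * ((s:ℤ) - 1)) := by
      have hs0 : (s:ℤ) ≠ 0 := by omega
      have h4 : (b + k * ((s:ℤ) - 1)) * (s:ℤ) = 0 := by
        rw [hk] at hab; ring_nf; ring_nf at hab; linarith
      have := (mul_eq_zero.mp h4).resolve_right hs0
      linarith
    have hk1 : 1 ≤ |k| := Int.one_le_abs hk0
    have h5 : (s:ℤ) ≤ |a| := by
      rw [hk, abs_mul]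
      nlinarith [abs_nonneg k, abs_of_nonneg (by omega : (0:ℤ) ≤ (s:ℤ))]
    have h6 : (s:ℤ) - 1 ≤ |b| := by
      rw [hbk, abs_neg, abs_mul]
      nlinarith [abs_nonneg k, abs_of_nonneg (by omega : (0:ℤ) ≤ (s:ℤ) - 1)]
    have h7 : |a| ≤ (n1:ℤ) + (n2:ℤ) := by
      rcases abs_cases a with ⟨h, _⟩ | ⟨h, _⟩ <;> omega
    have h8 : |b| ≤ (n3:ℤ) + (n4:ℤ) := by
      rcases abs_cases b with ⟨h, _⟩ | ⟨h, _⟩ <;> omega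
    omega

lemma ofReal_pactC (L : ℕ) (t : ℝ) (θ : Fin L → ℝ) (k : Fin L) :
    (((pactC L t θ k).re : ℝ) : ℂ) = pactC L t θ k :=
  Complex.conj_eq_iff_re.mp (conj_pactC L t θ k)

lemma prod_pactC (L : ℕ) (m : ℕ) (θ : Fin L → ℝ) (idx : Fin m → Fin L) (t : ℝ) :
    ∏ i, pactC L t θ (idx i)
      = ∑ g ∈ Fintype.piFinset (fun _ : Fin m => Finset.Icc (-((L:ℤ)/2)) ((L:ℤ)/2)),
          ((((Real.sqrt L : ℝ) : ℂ)⁻¹ ^ m *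
            ∏ i, (dft L θ (g i) *
              Complex.exp (-(2 * (Real.pi : ℂ) * Complex.I * ((g i : ℤ) : ℂ) *
                ((idx i : ℕ) : ℂ)) / (L : ℂ))))
            * Complex.exp (2 * (Real.pi : ℂ) * Complex.I * (t : ℂ) * ((∑ i, g i : ℤ) : ℂ))) := by
  unfold pactC
  rw [Finset.prod_mul_distrib, Finset.prod_const, Finset.prod_univ_sum, Finset.mul_sum]
  refine Finset.sum_congr rfl fun g _ => ?_
  have hre : ∀ i : Fin m,
      Complex.exp (2 * (Real.pi : ℂ) * Complex.I * (t : ℂ) * ((g i : ℤ) : ℂ)) * dft L θ (g i) *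
        Complex.exp (-(2 * (Real.pi : ℂ) * Complex.I * ((g i : ℤ) : ℂ) * ((idx i : ℕ) : ℂ)) / (L : ℂ))
      = (dft L θ (g i) *
          Complex.exp (-(2 * (Real.pi : ℂ) * Complex.I * ((g i : ℤ) : ℂ) * ((idx i : ℕ) : ℂ)) / (L : ℂ)))
        * Complex.exp (2 * (Real.pi : ℂ) * Complex.I * (t : ℂ) * ((g i : ℤ) : ℂ)) := by
    intro i; ring
  rw [Finset.prod_congr rfl fun i _ => hre i, Finset.prod_mul_distrib]
  have hexp : ∏ i : Fin m, Complex.exp (2 * (Real.pi : ℂ) * Complex.I * (t : ℂ) * ((g i : ℤ) : ℂ))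
      = Complex.exp (2 * (Real.pi : ℂ) * Complex.I * (t : ℂ) * ((∑ i, g i : ℤ) : ℂ)) := by
    rw [← Complex.exp_sum]
    congr 1
    rw [← Finset.mul_sum]
    congr 1
    push_cast
    rfl
  rw [hexp, Finset.card_univ, Fintype.card_fin]
  ring

lemma integral_prod_pactC (L : ℕ) (m : ℕ) (θ : Fin L → ℝ) (idx : Fin m → Fin L) :
    (∫ t in (0:ℝ)..1, ∏ i, pactC L t θ (idx i))
      = ∑ g ∈ Fintype.piFinset (fun _ : Fin m => Finset.Icc (-((L:ℤ)/2)) ((L:ℤ)/2)),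
          ((((Real.sqrt L : ℝ) : ℂ)⁻¹ ^ m *
            ∏ i, (dft L θ (g i) *
              Complex.exp (-(2 * (Real.pi : ℂ) * Complex.I * ((g i : ℤ) : ℂ) *
                ((idx i : ℕ) : ℂ)) / (L : ℂ))))
            * (if (∑ i, g i : ℤ) = 0 then 1 else 0)) := by
  have h1 : ∀ t : ℝ, ∏ i, pactC L t θ (idx i) = _ := fun t => prod_pactC L m θ idx t
  rw [intervalIntegral.integral_congr (g := fun t => ∑ g ∈ Fintype.piFinset
      (fun _ : Fin m => Finset.Icc (-((L:ℤ)/2)) ((L:ℤ)/2)),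
        ((((Real.sqrt L : ℝ) : ℂ)⁻¹ ^ m *
          ∏ i, (dft L θ (g i) *
            Complex.exp (-(2 * (Real.pi : ℂ) * Complex.I * ((g i : ℤ) : ℂ) *
              ((idx i : ℕ) : ℂ)) / (L : ℂ))))
          * Complex.exp (2 * (Real.pi : ℂ) * Complex.I * (t : ℂ) * ((∑ i, g i : ℤ) : ℂ))))
    (fun t _ => prod_pactC L m θ idx t)]
  rw [intervalIntegral.integral_finset_sum]
  · exact Finset.sum_congr rfl fun g _ => by
      rw [intervalIntegral.integral_const_mul, integral_exp_int]
  · intro g _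
    apply Continuous.intervalIntegrable
    fun_prop

/-- **Proposition (moment matching for the phase shift group).**
Fix `2 ≤ s ≤ ⌊L/2⌋` and let `θ, φ ∈ ℝ^L` have Fourier transforms vanishing outside
`{±(s-1), ±s}` and with matching moduli on `{±(s-1), ±s}`. Then for `G` Haar-uniform on
`𝒮` and every `1 ≤ m ≤ 2s-2`, the moment tensors `E[(Gθ)^{⊗m}]` and `E[(Gφ)^{⊗m}]`
coincide entrywise. -/
theorem moment_matching_phase_shift
    (L : ℕ) (hL : Odd L) (hL0 : 0 < L)
    (s : ℕ) (hs2 : 2 ≤ s) (hsL : s ≤ L / 2)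
    (θ φ : Fin L → ℝ)
    (hzero : ∀ j : ℤ, |j| ≤ (L : ℤ) / 2 →
      j ∉ ({(s : ℤ) - 1, -((s : ℤ) - 1), (s : ℤ), -(s : ℤ)} : Set ℤ) →
      dft L θ j = 0 ∧ dft L φ j = 0)
    (hmod : ∀ j ∈ ({(s : ℤ) - 1, -((s : ℤ) - 1), (s : ℤ), -(s : ℤ)} : Set ℤ),
      ‖dft L θ j‖ = ‖dft L φ j‖) :
    ∀ m : ℕ, 1 ≤ m → m ≤ 2 * s - 2 →
    ∀ idx : Fin m → Fin L,
      (∫ t in (0:ℝ)..1, ∏ i, pact L t θ (idx i)) =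
        (∫ t in (0:ℝ)..1, ∏ i, pact L t φ (idx i)) := by
  intro m hm1 hm2 idx
  have hcast : ∀ ψ : Fin L → ℝ,
      (((∫ t in (0:ℝ)..1, ∏ i, pact L t ψ (idx i)) : ℝ) : ℂ)
        = ∫ t in (0:ℝ)..1, ∏ i, pactC L t ψ (idx i) := by
    intro ψ
    rw [show (∫ t in (0:ℝ)..1, ∏ i, pactC L t ψ (idx i))
        = ∫ t in (0:ℝ)..1, ((∏ i, pact L t ψ (idx i) : ℝ) : ℂ) from
      intervalIntegral.integral_congr fun t _ => by
        rw [Complex.ofReal_prod]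
        exact (Finset.prod_congr rfl fun i _ => ofReal_pactC L t ψ (idx i)).symm]
    exact (RCLike.intervalIntegral_ofReal (𝕜 := ℂ)).symm
  have hkey : (∫ t in (0:ℝ)..1, ∏ i, pactC L t θ (idx i))
      = ∫ t in (0:ℝ)..1, ∏ i, pactC L t φ (idx i) := by
    rw [integral_prod_pactC, integral_prod_pactC]
    refine Finset.sum_congr rfl fun g hg => ?_
    by_cases hN : (∑ i, g i : ℤ) = 0
    · rw [if_pos hN]
      congr 2
      rw [Finset.prod_mul_distrib, Finset.prod_mul_distrib]
      suffices h : ∏ i, dft L θ (g i) = ∏ i, dft L φ (g i) by rw [h]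
      by_cases hall : ∀ i, g i ∈ ({(s:ℤ) - 1, -((s:ℤ) - 1), (s:ℤ), -(s:ℤ)} : Finset ℤ)
      · obtain ⟨e1, e2⟩ := fiber_counts s hs2 hm2 g hall hN
        rw [prod_eq_pow g _ hall (dft L θ), prod_eq_pow g _ hall (dft L φ)]
        have hs2' : (2:ℤ) ≤ (s:ℤ) := by exact_mod_cast hs2
        have hprodexp : ∀ F : ℤ → ℂ,
            ∏ v ∈ ({(s:ℤ) - 1, -((s:ℤ) - 1), (s:ℤ), -(s:ℤ)} : Finset ℤ), F v
              = F ((s:ℤ) - 1) * F (-((s:ℤ) - 1)) * F (s:ℤ) * F (-(s:ℤ)) := by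
          intro F
          rw [Finset.prod_insert (by intro h; simp only [Finset.mem_insert,
              Finset.mem_singleton] at h; omega),
            Finset.prod_insert (by intro h; simp only [Finset.mem_insert,
              Finset.mem_singleton] at h; omega),
            Finset.prod_insert (by intro h; simp only [Finset.mem_singleton] at h; omega),
            Finset.prod_singleton]
          ring
        rw [hprodexp, hprodexp]
        have key1 : dft L θ ((s:ℤ) - 1) * dft L θ (-((s:ℤ) - 1))
            = dft L φ ((s:ℤ) - 1) * dft L φ (-((s:ℤ) - 1)) := by
          rw [← conj_dft, ← conj_dft, Complex.mul_conj, Complex.mul_conj,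
            Complex.normSq_eq_norm_sq, Complex.normSq_eq_norm_sq, hmod _ (by left; rfl)]
        have key2 : dft L θ (s:ℤ) * dft L θ (-(s:ℤ))
            = dft L φ (s:ℤ) * dft L φ (-(s:ℤ)) := by
          rw [← conj_dft, ← conj_dft, Complex.mul_conj, Complex.mul_conj,
            Complex.normSq_eq_norm_sq, Complex.normSq_eq_norm_sq,
            hmod _ (by right; right; left; rfl)]
        rw [← e1, ← e2]
        calc dft L θ ((s:ℤ) - 1) ^ (Finset.univ.filter fun i => g i = (s:ℤ) - 1).card
              * dft L θ (-((s:ℤ) - 1)) ^ (Finset.univ.filter fun i => g i = (s:ℤ) - 1).card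
              * dft L θ (s:ℤ) ^ (Finset.univ.filter fun i => g i = (s:ℤ)).card
              * dft L θ (-(s:ℤ)) ^ (Finset.univ.filter fun i => g i = (s:ℤ)).card
            = (dft L θ ((s:ℤ) - 1) * dft L θ (-((s:ℤ) - 1)))
                ^ (Finset.univ.filter fun i => g i = (s:ℤ) - 1).card
              * (dft L θ (s:ℤ) * dft L θ (-(s:ℤ)))
                ^ (Finset.univ.filter fun i => g i = (s:ℤ)).card := by
              rw [mul_pow, mul_pow]; ring
          _ = (dft L φ ((s:ℤ) - 1) * dft L φ (-((s:ℤ) - 1)))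
                ^ (Finset.univ.filter fun i => g i = (s:ℤ) - 1).card
              * (dft L φ (s:ℤ) * dft L φ (-(s:ℤ)))
                ^ (Finset.univ.filter fun i => g i = (s:ℤ)).card := by
              rw [key1, key2]
          _ = _ := by rw [mul_pow, mul_pow]; ring
      · push_neg at hall
        obtain ⟨i, hi⟩ := hall
        have hIcc := (Fintype.mem_piFinset.mp hg) i
        have habs : |g i| ≤ (L:ℤ) / 2 := by
          rw [abs_le]; simpa [Finset.mem_Icc] using hIcc
        have hnot : g i ∉ ({(s:ℤ) - 1, -((s:ℤ) - 1), (s:ℤ), -(s:ℤ)} : Set ℤ) := by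
          intro hmem
          apply hi
          simp only [Set.mem_insert_iff, Set.mem_singleton_iff] at hmem
          simp only [Finset.mem_insert, Finset.mem_singleton]
          tauto
        obtain ⟨hθ0, hφ0⟩ := hzero (g i) habs hnot
        rw [Finset.prod_eq_zero (Finset.mem_univ i) hθ0,
          Finset.prod_eq_zero (Finset.mem_univ i) hφ0]
    · rw [if_neg hN, mul_zero, mul_zero]
  have := (hcast θ).trans (hkey.trans (hcast φ).symm)
  exact_mod_cast this
end
end

section
/- Moment matching for the cyclic group: Suppose θ, φ ∈ ℝ^L satisfy |θ̂_j| = |φ̂_j| for j ∈ {±1} and θ̂_j = φ̂_j = 0 for all j ∉ {±1}. If G is drawn uniformly from the cyclic shift group 𝒞, then for every m = 1, …, L−1, the m-th moment tensors satisfy E[(Gθ)^{⊗m}] = E[(Gφ)^{⊗m}]. -/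
open MeasureTheory Real Finset

noncomputable section

/-- Circular coordinate shift by `k`: `(G_k θ)_i = θ_{i+k}` (indices mod `L`). -/
def cshift (L : ℕ) (k : Fin L) (θ : Fin L → ℝ) : Fin L → ℝ := fun i => θ (i + k)

namespace MMaux

noncomputable def ee (L : ℕ) (n : ℤ) : ℂ := Complex.exp (2 * (Real.pi : ℂ) * Complex.I * (n : ℂ) / (L : ℂ))

lemma ee_add (L : ℕ) (m n : ℤ) : ee L (m + n) = ee L m * ee L n := by
  rw [ee, ee, ee, ← Complex.exp_add]
  congr 1
  push_cast
  ring

lemma ee_zero (L : ℕ) : ee L 0 = 1 := by simp [ee]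

lemma ee_mul_L (L : ℕ) (hL : 0 < L) (t : ℤ) : ee L ((L : ℤ) * t) = 1 := by
  have hL' : (L : ℂ) ≠ 0 := by exact_mod_cast hL.ne'
  rw [ee, show 2 * (Real.pi : ℂ) * Complex.I * ((((L : ℤ) * t) : ℤ) : ℂ) / (L : ℂ)
      = (t : ℂ) * (2 * (Real.pi : ℂ) * Complex.I) by push_cast; field_simp]
  exact Complex.exp_int_mul_two_pi_mul_I t

lemma ee_eq_one_iff (L : ℕ) (hL : 0 < L) (n : ℤ) : ee L n = 1 ↔ (L : ℤ) ∣ n := by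
  have hL' : (L : ℂ) ≠ 0 := by exact_mod_cast hL.ne'
  constructor
  · intro h
    rw [ee, Complex.exp_eq_one_iff] at h
    obtain ⟨c, hc⟩ := h
    refine ⟨c, ?_⟩
    rw [mul_comm]
    have h2 : (2 * (Real.pi : ℂ) * Complex.I) ≠ 0 := by
      simp [Real.pi_ne_zero, Complex.I_ne_zero, Complex.ofReal_ne_zero]
    have : (n : ℂ) = (c : ℂ) * (L : ℂ) := by
      field_simp at hc
      have := hc
      -- hc : 2 * π * I * n = c * (2 * π * I) * L
      have h3 : (2 * (Real.pi : ℂ) * Complex.I) * (n : ℂ) = (2 * (Real.pi : ℂ) * Complex.I) * ((c : ℂ) * (L : ℂ)) := by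
        linear_combination (2 * (Real.pi : ℂ) * Complex.I) * hc
      exact mul_left_cancel₀ h2 h3
    exact_mod_cast this
  · rintro ⟨c, rfl⟩
    exact ee_mul_L L hL c

lemma ee_int_mul_nat (L : ℕ) (n : ℤ) (k : ℕ) : ee L (n * (k : ℤ)) = ee L n ^ k := by
  induction k with
  | zero => simp [ee_zero]
  | succ k ih =>
    have : n * ((k + 1 : ℕ) : ℤ) = n * (k : ℤ) + n := by push_cast; ring
    rw [this, ee_add, ih, pow_succ]

lemma sum_ee (L : ℕ) (hL : 0 < L) (n : ℤ) :
    ∑ k : Fin L, ee L (n * (k : ℕ)) = if (L : ℤ) ∣ n then (L : ℂ) else 0 := by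
  have h1 : ∑ k : Fin L, ee L (n * (k : ℕ)) = ∑ i ∈ Finset.range L, ee L n ^ i := by
    rw [← Fin.sum_univ_eq_sum_range (fun i => ee L n ^ i) L]
    exact Finset.sum_congr rfl fun k _ => ee_int_mul_nat L n k
  rw [h1]
  by_cases h : (L : ℤ) ∣ n
  · rw [if_pos h]
    have : ee L n = 1 := (ee_eq_one_iff L hL n).mpr h
    simp [this]
  · rw [if_neg h]
    have hne : ee L n ≠ 1 := fun hc => h ((ee_eq_one_iff L hL n).mp hc)
    rw [geom_sum_eq hne]
    have : ee L n ^ L = 1 := by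
      rw [← ee_int_mul_nat, mul_comm]
      exact ee_mul_L L hL n
    rw [this]
    simp

lemma ee_conj (L : ℕ) (n : ℤ) : (starRingEnd ℂ) (ee L n) = ee L (-n) := by
  rw [ee, ee, ← Complex.exp_conj]
  congr 1
  simp [map_div₀, map_mul, Complex.conj_I, Complex.conj_ofReal, map_ofNat, map_intCast, map_natCast]

lemma dft_eq (L : ℕ) (θ : Fin L → ℝ) (j : ℤ) :
    dft L θ j = ((Real.sqrt L : ℝ) : ℂ)⁻¹ * ∑ k : Fin L, ee L (j * (k : ℕ)) * ((θ k : ℝ) : ℂ) := by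
  rw [dft]
  congr 1
  refine Finset.sum_congr rfl fun k _ => ?_
  congr 1
  rw [ee]
  congr 1
  push_cast
  ring

lemma ee_natCast_mod (L : ℕ) (hL : 0 < L) (x : ℕ) : ee L ((x % L : ℕ) : ℤ) = ee L (x : ℤ) := by
  have hx : (x : ℤ) = (L : ℤ) * ((x / L : ℕ) : ℤ) + ((x % L : ℕ) : ℤ) := by
    exact_mod_cast (Nat.div_add_mod x L).symm
  conv_rhs => rw [hx]
  rw [ee_add, ee_mul_L L hL, one_mul]

lemma ee_prod {ι : Type*} (L : ℕ) (s : Finset ι) (f : ι → ℤ) :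
    ∏ i ∈ s, ee L (f i) = ee L (∑ i ∈ s, f i) := by
  classical
  induction s using Finset.cons_induction with
  | empty => simp [ee_zero]
  | cons a s ha ih => rw [Finset.prod_cons, Finset.sum_cons, ee_add, ih]

end MMaux

namespace MMaux

lemma dft_neg (L : ℕ) (θ : Fin L → ℝ) (j : ℤ) :
    dft L θ (-j) = (starRingEnd ℂ) (dft L θ j) := by
  rw [dft_eq, dft_eq, map_mul, map_inv₀, Complex.conj_ofReal, map_sum]
  congr 1
  refine Finset.sum_congr rfl fun k _ => ?_
  rw [map_mul, ee_conj, Complex.conj_ofReal, neg_mul]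

lemma dft_add_L (L : ℕ) (hL : 0 < L) (θ : Fin L → ℝ) (j : ℤ) :
    dft L θ (j + (L : ℤ)) = dft L θ j := by
  rw [dft_eq, dft_eq]
  congr 1
  refine Finset.sum_congr rfl fun k _ => ?_
  congr 1
  rw [show (j + (L : ℤ)) * ((k : ℕ) : ℤ) = j * ((k : ℕ) : ℤ) + (L : ℤ) * ((k : ℕ) : ℤ) by ring,
    ee_add, ee_mul_L L hL, mul_one]

lemma inversion (L : ℕ) (hL3 : 3 ≤ L) (θ : Fin L → ℝ)
    (hsupp : ∀ j : ℕ, j < L → j ≠ 1 → j ≠ L - 1 → dft L θ (j : ℤ) = 0)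
    (v : Fin L) :
    ((θ v : ℝ) : ℂ) = ((Real.sqrt L : ℝ) : ℂ)⁻¹ *
      (ee L (-((v : ℕ) : ℤ)) * dft L θ 1 + ee L ((v : ℕ) : ℤ) * (starRingEnd ℂ) (dft L θ 1)) := by
  have hL0 : 0 < L := by omega
  set s : ℂ := ((Real.sqrt L : ℝ) : ℂ) with hs_def
  have hs0 : s ≠ 0 := by
    simp only [hs_def, Complex.ofReal_ne_zero]
    positivity
  have hss : s * s = (L : ℂ) := by
    rw [hs_def, ← Complex.ofReal_mul, Real.mul_self_sqrt (by positivity)]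
    norm_cast
  have step1 : ∀ j : Fin L, ee L (-(((j : ℕ) : ℤ) * ((v : ℕ) : ℤ))) * dft L θ ((j : ℕ) : ℤ)
      = s⁻¹ * ∑ k : Fin L, ee L ((((k : ℕ) : ℤ) - ((v : ℕ) : ℤ)) * ((j : ℕ) : ℤ)) * ((θ k : ℝ) : ℂ) := by
    intro j
    rw [dft_eq, mul_left_comm]
    congr 1
    rw [Finset.mul_sum]
    refine Finset.sum_congr rfl fun k _ => ?_
    rw [← mul_assoc, ← ee_add]
    congr 2
    ring
  have horth : ∑ j : Fin L, ee L (-(((j : ℕ) : ℤ) * ((v : ℕ) : ℤ))) * dft L θ ((j : ℕ) : ℤ)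
      = s * ((θ v : ℝ) : ℂ) := by
    rw [Finset.sum_congr rfl (fun j _ => step1 j), ← Finset.mul_sum, Finset.sum_comm]
    have hin : ∀ k : Fin L,
        ∑ j : Fin L, ee L ((((k : ℕ) : ℤ) - ((v : ℕ) : ℤ)) * ((j : ℕ) : ℤ)) * ((θ k : ℝ) : ℂ)
        = (if ((L : ℤ) ∣ (((k : ℕ) : ℤ) - ((v : ℕ) : ℤ))) then (L : ℂ) else 0) * ((θ k : ℝ) : ℂ) := by
      intro k
      rw [← Finset.sum_mul, sum_ee L hL0]
    rw [Finset.sum_congr rfl (fun k _ => hin k), Finset.sum_eq_single v]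
    · rw [sub_self, if_pos (dvd_zero _), ← hss]
      field_simp
    · intro k _ hk
      rw [if_neg, zero_mul]
      intro hdvd
      have h0 : (((k : ℕ) : ℤ) - ((v : ℕ) : ℤ)) = 0 := by
        refine Int.eq_zero_of_abs_lt_dvd hdvd ?_
        have := k.isLt
        have := v.isLt
        rw [abs_sub_lt_iff]
        omega
      exact hk (Fin.ext (by omega))
    · intro h
      exact absurd (Finset.mem_univ v) h
  -- reduce sum to the two terms j = 1 and j = L - 1
  have h1L : (1 : ℕ) < L := by omega
  have h2L : L - 1 < L := by omega
  set j1 : Fin L := ⟨1, h1L⟩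
  set j2 : Fin L := ⟨L - 1, h2L⟩
  have hne : j1 ≠ j2 := by
    intro h
    have := congrArg Fin.val h
    simp only [j1, j2] at this
    omega
  have hpair : ∑ j : Fin L, ee L (-(((j : ℕ) : ℤ) * ((v : ℕ) : ℤ))) * dft L θ ((j : ℕ) : ℤ)
      = ee L (-(((j1 : ℕ) : ℤ) * ((v : ℕ) : ℤ))) * dft L θ ((j1 : ℕ) : ℤ)
        + ee L (-(((j2 : ℕ) : ℤ) * ((v : ℕ) : ℤ))) * dft L θ ((j2 : ℕ) : ℤ) := by
    have h0 : ∑ j ∈ ({j1, j2} : Finset (Fin L)), ee L (-(((j : ℕ) : ℤ) * ((v : ℕ) : ℤ))) * dft L θ ((j : ℕ) : ℤ)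
        = ∑ j : Fin L, ee L (-(((j : ℕ) : ℤ) * ((v : ℕ) : ℤ))) * dft L θ ((j : ℕ) : ℤ) := by
      refine Finset.sum_subset (Finset.subset_univ _) ?_
      intro x _ hx
      simp only [Finset.mem_insert, Finset.mem_singleton] at hx
      push_neg at hx
      have hx1 : (x : ℕ) ≠ 1 := fun h => hx.1 (Fin.ext (by simpa [j1] using h))
      have hx2 : (x : ℕ) ≠ L - 1 := fun h => hx.2 (Fin.ext (by simpa [j2] using h))
      rw [hsupp (x : ℕ) x.isLt hx1 hx2, mul_zero]
    rw [← h0, Finset.sum_pair hne]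
  have hj1v : ((j1 : ℕ) : ℤ) = 1 := by simp [j1]
  have hj2v : ((j2 : ℕ) : ℤ) = (L : ℤ) - 1 := by
    simp only [j2]
    omega
  have hd2 : dft L θ ((j2 : ℕ) : ℤ) = (starRingEnd ℂ) (dft L θ 1) := by
    rw [hj2v, show (L : ℤ) - 1 = -1 + (L : ℤ) by ring, dft_add_L L hL0, ← dft_neg]
  have he2 : ee L (-(((j2 : ℕ) : ℤ) * ((v : ℕ) : ℤ))) = ee L ((v : ℕ) : ℤ) := by
    rw [hj2v, show -(((L : ℤ) - 1) * ((v : ℕ) : ℤ)) = ((v : ℕ) : ℤ) + (L : ℤ) * (-((v : ℕ) : ℤ)) by ring,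
      ee_add, ee_mul_L L hL0, mul_one]
  rw [hpair, hj1v, hd2, he2, one_mul] at horth
  rw [horth]
  field_simp

end MMaux

namespace MMaux

lemma ee_neg' (L : ℕ) (x : ℤ) : ee L (-x) = (starRingEnd ℂ) (ee L x) := (ee_conj L x).symm

lemma main_sum (L : ℕ) (hL3 : 3 ≤ L) (θ : Fin L → ℝ)
    (hsupp : ∀ j : ℕ, j < L → j ≠ 1 → j ≠ L - 1 → dft L θ (j : ℤ) = 0)
    (m : ℕ) (hmL : m ≤ L - 1) (idx : Fin m → Fin L) :
    ((∑ k : Fin L, ∏ i, cshift L k θ (idx i) : ℝ) : ℂ) =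
      ((Real.sqrt L : ℝ) : ℂ)⁻¹ ^ m * ∑ t ∈ (Finset.univ : Finset (Fin m)).powerset,
        (if 2 * t.card = m then
          (L : ℂ) * ee L ((∑ i ∈ Finset.univ \ t, ((idx i : ℕ) : ℤ)) - ∑ i ∈ t, ((idx i : ℕ) : ℤ)) *
            (((‖dft L θ 1‖ ^ 2 : ℝ)) : ℂ) ^ t.card
         else 0) := by
  classical
  have hL0 : 0 < L := by omega
  set s : ℂ := ((Real.sqrt L : ℝ) : ℂ) with hs_def
  set a : ℂ := dft L θ 1 with ha_def
  set n : Fin m → ℤ := fun i => ((idx i : ℕ) : ℤ) with hn_def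
  have hterm : ∀ (k : Fin L) (i : Fin m), ((cshift L k θ (idx i) : ℝ) : ℂ)
      = s⁻¹ * (ee L (-(n i + ((k : ℕ) : ℤ))) * a
          + ee L (n i + ((k : ℕ) : ℤ)) * (starRingEnd ℂ) a) := by
    intro k i
    have he : ee L ((((idx i + k : Fin L) : ℕ)) : ℤ) = ee L (n i + ((k : ℕ) : ℤ)) := by
      rw [show ((((idx i + k : Fin L) : ℕ)) : ℤ)
          = (((((idx i : ℕ)) + (k : ℕ)) % L : ℕ) : ℤ) by rw [Fin.val_add],
        ee_natCast_mod L hL0]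
      have hcast : ((((idx i : ℕ) + (k : ℕ) : ℕ)) : ℤ) = n i + ((k : ℕ) : ℤ) := by
        push_cast [hn_def]
        ring
      rw [hcast]
    have hne : ee L (-((((idx i + k : Fin L) : ℕ)) : ℤ)) = ee L (-(n i + ((k : ℕ) : ℤ))) := by
      rw [ee_neg', ee_neg', he]
    show ((θ (idx i + k) : ℝ) : ℂ) = _
    rw [inversion L hL3 θ hsupp (idx i + k), he, hne, ha_def]
  calc ((∑ k : Fin L, ∏ i, cshift L k θ (idx i) : ℝ) : ℂ)
      = ∑ k : Fin L, ∏ i, ((cshift L k θ (idx i) : ℝ) : ℂ) := by push_cast; rfl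
    _ = ∑ k : Fin L, s⁻¹ ^ m * ∑ t ∈ (Finset.univ : Finset (Fin m)).powerset,
          (ee L (((∑ i ∈ Finset.univ \ t, n i) - (∑ i ∈ t, n i))
              + (((m - t.card : ℕ) : ℤ) - (t.card : ℤ)) * ((k : ℕ) : ℤ))
            * (a ^ t.card * ((starRingEnd ℂ) a) ^ (m - t.card))) := by
        refine Finset.sum_congr rfl fun k _ => ?_
        rw [Finset.prod_congr rfl (fun i _ => hterm k i), Finset.prod_mul_distrib,
          Finset.prod_const, Finset.card_univ, Fintype.card_fin]
        congr 1
        rw [Finset.prod_add]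
        refine Finset.sum_congr rfl fun t ht => ?_
        rw [Finset.prod_mul_distrib, Finset.prod_mul_distrib, Finset.prod_const,
          Finset.prod_const, ee_prod, ee_prod,
          Finset.card_sdiff_of_subset (Finset.subset_univ t), Finset.card_univ, Fintype.card_fin]
        rw [show (ee L (∑ i ∈ t, -(n i + ((k : ℕ) : ℤ))) * a ^ t.card)
              * (ee L (∑ i ∈ Finset.univ \ t, (n i + ((k : ℕ) : ℤ)))
                  * ((starRingEnd ℂ) a) ^ (m - t.card))
            = ee L ((∑ i ∈ t, -(n i + ((k : ℕ) : ℤ)))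
                + ∑ i ∈ Finset.univ \ t, (n i + ((k : ℕ) : ℤ)))
              * (a ^ t.card * ((starRingEnd ℂ) a) ^ (m - t.card)) by rw [ee_add]; ring]
        congr 2
        have hc : t.card ≤ m := by
          simpa using Finset.card_le_card (Finset.subset_univ t)
        rw [Finset.sum_neg_distrib]
        rw [Finset.sum_add_distrib, Finset.sum_add_distrib, Finset.sum_const, Finset.sum_const,
          Finset.card_sdiff_of_subset (Finset.subset_univ t), Finset.card_univ, Fintype.card_fin,
          nsmul_eq_mul, nsmul_eq_mul]
        push_cast [hc]
        ring
    _ = s⁻¹ ^ m * ∑ t ∈ (Finset.univ : Finset (Fin m)).powerset, ∑ k : Fin L,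
          (ee L (((∑ i ∈ Finset.univ \ t, n i) - (∑ i ∈ t, n i))
              + (((m - t.card : ℕ) : ℤ) - (t.card : ℤ)) * ((k : ℕ) : ℤ))
            * (a ^ t.card * ((starRingEnd ℂ) a) ^ (m - t.card))) := by
        rw [← Finset.mul_sum, Finset.sum_comm]
    _ = s⁻¹ ^ m * ∑ t ∈ (Finset.univ : Finset (Fin m)).powerset,
        (if 2 * t.card = m then
          (L : ℂ) * ee L ((∑ i ∈ Finset.univ \ t, n i) - ∑ i ∈ t, n i)
            * (((‖a‖ ^ 2 : ℝ)) : ℂ) ^ t.card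
         else 0) := by
        congr 1
        refine Finset.sum_congr rfl fun t ht => ?_
        have hc : t.card ≤ m := by
          simpa using Finset.card_le_card (Finset.subset_univ t)
        set D : ℤ := (∑ i ∈ Finset.univ \ t, n i) - ∑ i ∈ t, n i with hD
        set d : ℤ := ((m - t.card : ℕ) : ℤ) - (t.card : ℤ) with hd
        set C : ℂ := a ^ t.card * ((starRingEnd ℂ) a) ^ (m - t.card) with hC
        have hsum : ∑ k : Fin L, ee L (D + d * ((k : ℕ) : ℤ)) * C
            = (if (L : ℤ) ∣ d then (L : ℂ) else 0) * (ee L D * C) := by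
          rw [show (fun k : Fin L => ee L (D + d * ((k : ℕ) : ℤ)) * C)
              = (fun k : Fin L => ee L (d * ((k : ℕ) : ℤ)) * (ee L D * C)) by
            funext k; rw [ee_add]; ring]
          rw [← Finset.sum_mul, sum_ee L hL0]
        rw [hsum]
        by_cases h2 : 2 * t.card = m
        · have hd0 : d = 0 := by rw [hd]; omega
          rw [if_pos h2, if_pos (hd0 ▸ dvd_zero (L : ℤ))]
          have hmc : m - t.card = t.card := by omega
          rw [hC, hmc, ← mul_pow, Complex.mul_conj, ← Complex.sq_norm]
          push_cast
          ring
        · rw [if_neg h2, if_neg, zero_mul]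
          intro hdvd
          have hd0 : d ≠ 0 := by rw [hd]; omega
          have hge := Int.le_of_dvd (abs_pos.mpr hd0) ((dvd_abs (L : ℤ) d).mpr hdvd)
          have habs : |d| ≤ (m : ℤ) := by
            rw [abs_le, hd]
            omega
          omega

end MMaux


open MMaux

/-- **Proposition (moment matching for the cyclic group).**
Suppose `θ, φ ∈ ℝ^L` have Fourier transforms vanishing outside `{±1}` and matching
moduli at `±1`. Then for `G` uniform on the cyclic shift group `𝒞` and every
`1 ≤ m ≤ L-1`, the moment tensors `E[(Gθ)^{⊗m}]` and `E[(Gφ)^{⊗m}]` coincide entrywise. -/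
theorem moment_matching_cyclic
    (L : ℕ) (hL : Odd L) (hL0 : 0 < L)
    (θ φ : Fin L → ℝ)
    (hzero : ∀ j : ℤ, |j| ≤ (L : ℤ) / 2 → j ∉ ({1, -1} : Set ℤ) →
      dft L θ j = 0 ∧ dft L φ j = 0)
    (hmod : ∀ j ∈ ({1, -1} : Set ℤ),
      ‖dft L θ j‖ = ‖dft L φ j‖) :
    ∀ m : ℕ, 1 ≤ m → m ≤ L - 1 →
    ∀ idx : Fin m → Fin L,
      ((L : ℝ)⁻¹ * ∑ k : Fin L, ∏ i, cshift L k θ (idx i)) =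
        ((L : ℝ)⁻¹ * ∑ k : Fin L, ∏ i, cshift L k φ (idx i)) := by
  intro m hm1 hmL idx
  have hLodd : L % 2 = 1 := Nat.odd_iff.mp hL
  have hL3 : 3 ≤ L := by omega
  have hsupp : ∀ (ψ : Fin L → ℝ),
      (∀ j : ℤ, |j| ≤ (L : ℤ) / 2 → j ∉ ({1, -1} : Set ℤ) → dft L ψ j = 0) →
      ∀ j : ℕ, j < L → j ≠ 1 → j ≠ L - 1 → dft L ψ (j : ℤ) = 0 := by
    intro ψ hz j hjL hj1 hjL1
    by_cases hle : (j : ℤ) ≤ (L : ℤ) / 2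
    · refine hz (j : ℤ) (by rw [abs_of_nonneg (by positivity)]; exact hle) ?_
      simp only [Set.mem_insert_iff, Set.mem_singleton_iff]
      push_neg
      omega
    · rw [show (j : ℤ) = ((j : ℤ) - (L : ℤ)) + (L : ℤ) by ring, dft_add_L L (by omega)]
      refine hz ((j : ℤ) - (L : ℤ)) ?_ ?_
      · rw [abs_of_nonpos (by omega)]
        omega
      · simp only [Set.mem_insert_iff, Set.mem_singleton_iff]
        push_neg
        omega
  have hθ := main_sum L hL3 θ (hsupp θ fun j h1 h2 => (hzero j h1 h2).1) m hmL idx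
  have hφ := main_sum L hL3 φ (hsupp φ fun j h1 h2 => (hzero j h1 h2).2) m hmL idx
  have hmod1 : ‖dft L θ 1‖ = ‖dft L φ 1‖ :=
    hmod 1 (by simp)
  rw [hmod1] at hθ
  have : (∑ k : Fin L, ∏ i, cshift L k θ (idx i))
      = ∑ k : Fin L, ∏ i, cshift L k φ (idx i) :=
    Complex.ofReal_inj.mp (hθ.trans hφ.symm)
  rw [this]
end
end

section
/- KL lower bound via a separating test statistic: Let P₀ and P₁ be probability distributions on a measurable space 𝒳. Suppose there exists a measurable function T : 𝒳 → ℝ such that (E_{P₀}[T] − E_{P₁}[T])² = μ² and max(Var_{P₀}(T), Var_{P₁}(T)) ≤ σ². Then the Kullback–Leibler divergence satisfies D(P₀‖P₁) ≥ μ² / (4σ² + μ²). -/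
open MeasureTheory ProbabilityTheory

/-- Cauchy–Schwarz inequality for integrals of real functions. -/
private lemma integral_sq_cauchy {α : Type*} [MeasurableSpace α] (μ : Measure α) (u v : α → ℝ)
    (hu : MemLp u 2 μ) (hv : MemLp v 2 μ) :
    (∫ x, u x * v x ∂μ) ^ 2 ≤ (∫ x, u x ^ 2 ∂μ) * (∫ x, v x ^ 2 ∂μ) := by
  have h2 : Real.HolderConjugate 2 2 := Real.HolderConjugate.two_two
  have h22 : ENNReal.ofReal (2:ℝ) = 2 := by norm_num
  have hu' : MemLp u (ENNReal.ofReal (2:ℝ)) μ := by rw [h22]; exact hu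
  have hv' : MemLp v (ENNReal.ofReal (2:ℝ)) μ := by rw [h22]; exact hv
  have key := MeasureTheory.integral_mul_norm_le_Lp_mul_Lq h2 hu' hv'
  have hnorm : ∀ (w : α → ℝ), ∫ a, ‖w a‖ ^ (2:ℝ) ∂μ = ∫ a, w a ^ 2 ∂μ := fun w =>
    integral_congr_ae (Filter.Eventually.of_forall fun a => by
      simp only [Real.norm_eq_abs]
      rw [show (2:ℝ) = ((2:ℕ):ℝ) by norm_num, Real.rpow_natCast, sq_abs])
  rw [hnorm u, hnorm v] at key
  have habs : |∫ x, u x * v x ∂μ| ≤ ∫ a, ‖u a‖ * ‖v a‖ ∂μ := by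
    calc |∫ x, u x * v x ∂μ| ≤ ∫ x, |u x| * |v x| ∂μ := by
          simpa [Real.norm_eq_abs, abs_mul] using
            norm_integral_le_integral_norm (μ := μ) (fun x => u x * v x)
      _ = ∫ a, ‖u a‖ * ‖v a‖ ∂μ := by simp [Real.norm_eq_abs]
  have hA : 0 ≤ ∫ x, u x ^ 2 ∂μ := integral_nonneg fun x => sq_nonneg _
  have hB : 0 ≤ ∫ x, v x ^ 2 ∂μ := integral_nonneg fun x => sq_nonneg _
  have hsq : |∫ x, u x * v x ∂μ| ^ 2 ≤
      ((∫ x, u x ^ 2 ∂μ) ^ (1/2:ℝ) * (∫ x, v x ^ 2 ∂μ) ^ (1/2:ℝ)) ^ 2 :=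
    pow_le_pow_left₀ (abs_nonneg _) (habs.trans key) 2
  rw [sq_abs] at hsq
  refine hsq.trans_eq ?_
  rw [mul_pow, ← Real.rpow_natCast ((∫ x, u x ^ 2 ∂μ) ^ (1/2:ℝ)) 2,
    ← Real.rpow_natCast ((∫ x, v x ^ 2 ∂μ) ^ (1/2:ℝ)) 2,
    ← Real.rpow_mul hA, ← Real.rpow_mul hB]
  norm_num

set_option maxHeartbeats 2000000 in
/-- **Lemma (KL lower bound via a separating test statistic).**
Let `P₀, P₁` be probability measures on `𝒳` and `T : 𝒳 → ℝ` a measurable statistic with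
`(E_{P₀}[T] - E_{P₁}[T])² = μ²` and `max(Var_{P₀}(T), Var_{P₁}(T)) ≤ σ²`. Then
`D(P₀‖P₁) ≥ μ²/(4σ² + μ²)`. (When `P₀ ≪ P₁` fails, `D = +∞` and the bound is trivial;
here the nontrivial finite case is stated, with `D(P₀‖P₁) = ∫ log(dP₀/dP₁) dP₀`.) -/
theorem kl_lower_bound_via_test_statistic
    (𝒳 : Type) [MeasurableSpace 𝒳] (P₀ P₁ : Measure 𝒳)
    [IsProbabilityMeasure P₀] [IsProbabilityMeasure P₁]
    (T : 𝒳 → ℝ) (hT : Measurable T)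
    (hT0 : MemLp T 2 P₀) (hT1 : MemLp T 2 P₁)
    (μ σ : ℝ)
    (hmean : ((∫ x, T x ∂P₀) - ∫ x, T x ∂P₁) ^ 2 = μ ^ 2)
    (hvar0 : variance T P₀ ≤ σ ^ 2) (hvar1 : variance T P₁ ≤ σ ^ 2)
    (hac : P₀ ≪ P₁) (hint : Integrable (llr P₀ P₁) P₀) :
    μ ^ 2 / (4 * σ ^ 2 + μ ^ 2) ≤ ∫ x, llr P₀ P₁ x ∂P₀ := by
  have hpmeas : Measurable fun x => (P₀.rnDeriv P₁ x).toReal :=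
    (Measure.measurable_rnDeriv _ _).ennreal_toReal
  set p : 𝒳 → ℝ := fun x => (P₀.rnDeriv P₁ x).toReal with hpdef
  have hp0 : ∀ x, 0 ≤ p x := fun x => ENNReal.toReal_nonneg
  set g : 𝒳 → ℝ := fun x => Real.sqrt (p x) with hgdef
  have hgmeas : Measurable g := Real.continuous_sqrt.measurable.comp hpmeas
  have hg0 : ∀ x, 0 ≤ g x := fun x => Real.sqrt_nonneg _
  have hgsq : ∀ x, g x ^ 2 = p x := fun x => Real.sq_sqrt (hp0 x)
  have hip : Integrable p P₁ := Measure.integrable_toReal_rnDeriv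
  have hipint : ∫ x, p x ∂P₁ = 1 := by
    have h := Measure.integral_toReal_rnDeriv hac
    rw [probReal_univ] at h
    exact h
  have hig : Integrable g P₁ := by
    refine ((integrable_const (1:ℝ)).add hip).mono' hgmeas.aestronglyMeasurable ?_
    filter_upwards with x
    simp only [Pi.add_apply]
    rw [Real.norm_of_nonneg (hg0 x), ← hgsq x]
    nlinarith [sq_nonneg (g x - 1)]
  set m₀ := ∫ x, T x ∂P₀ with hm0
  set m₁ := ∫ x, T x ∂P₁ with hm1
  set c := (m₀ + m₁) / 2 with hcdef
  set f := fun x => T x - c with hfdef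
  have hf0 : MemLp f 2 P₀ := hT0.sub (memLp_const c)
  have hf1 : MemLp f 2 P₁ := hT1.sub (memLp_const c)
  have hfi0 : Integrable f P₀ := hf0.integrable one_le_two
  have hfi1 : Integrable f P₁ := hf1.integrable one_le_two
  have hfsq0 : Integrable (fun x => f x ^ 2) P₀ := hf0.integrable_sq
  have hfsq1 : Integrable (fun x => f x ^ 2) P₁ := hf1.integrable_sq
  have hTi0 : Integrable T P₀ := hT0.integrable one_le_two
  have hTi1 : Integrable T P₁ := hT1.integrable one_le_two
  -- second moments of f
  have hexp0 : ∫ x, f x ^ 2 ∂P₀ = (∫ x, T x ^ 2 ∂P₀) - 2 * c * m₀ + c ^ 2 := by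
    have h1 : ∀ x, f x ^ 2 = T x ^ 2 - 2 * c * T x + c ^ 2 := fun x => by
      simp only [hfdef]; ring
    have e1 : ∫ x, f x ^ 2 ∂P₀ = ∫ x, (T x ^ 2 - 2 * c * T x + c ^ 2) ∂P₀ :=
      integral_congr_ae (Filter.Eventually.of_forall h1)
    have e2 : ∫ x, (T x ^ 2 - 2 * c * T x + c ^ 2) ∂P₀
        = (∫ x, (T x ^ 2 - 2 * c * T x) ∂P₀) + ∫ _x, (c ^ 2 : ℝ) ∂P₀ :=
      integral_add (hT0.integrable_sq.sub (hTi0.const_mul (2 * c))) (integrable_const _)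
    have e3 : ∫ x, (T x ^ 2 - 2 * c * T x) ∂P₀
        = (∫ x, T x ^ 2 ∂P₀) - ∫ x, 2 * c * T x ∂P₀ :=
      integral_sub hT0.integrable_sq (hTi0.const_mul (2 * c))
    have e4 : ∫ x, 2 * c * T x ∂P₀ = 2 * c * m₀ := by rw [integral_const_mul, hm0]
    have e5 : ∫ _x, (c ^ 2 : ℝ) ∂P₀ = c ^ 2 := by simp
    rw [e1, e2, e3, e4, e5]
  have hexp1 : ∫ x, f x ^ 2 ∂P₁ = (∫ x, T x ^ 2 ∂P₁) - 2 * c * m₁ + c ^ 2 := by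
    have h1 : ∀ x, f x ^ 2 = T x ^ 2 - 2 * c * T x + c ^ 2 := fun x => by
      simp only [hfdef]; ring
    have e1 : ∫ x, f x ^ 2 ∂P₁ = ∫ x, (T x ^ 2 - 2 * c * T x + c ^ 2) ∂P₁ :=
      integral_congr_ae (Filter.Eventually.of_forall h1)
    have e2 : ∫ x, (T x ^ 2 - 2 * c * T x + c ^ 2) ∂P₁
        = (∫ x, (T x ^ 2 - 2 * c * T x) ∂P₁) + ∫ _x, (c ^ 2 : ℝ) ∂P₁ :=
      integral_add (hT1.integrable_sq.sub (hTi1.const_mul (2 * c))) (integrable_const _)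
    have e3 : ∫ x, (T x ^ 2 - 2 * c * T x) ∂P₁
        = (∫ x, T x ^ 2 ∂P₁) - ∫ x, 2 * c * T x ∂P₁ :=
      integral_sub hT1.integrable_sq (hTi1.const_mul (2 * c))
    have e4 : ∫ x, 2 * c * T x ∂P₁ = 2 * c * m₁ := by rw [integral_const_mul, hm1]
    have e5 : ∫ _x, (c ^ 2 : ℝ) ∂P₁ = c ^ 2 := by simp
    rw [e1, e2, e3, e4, e5]
  have hvd0 : variance T P₀ = (∫ x, T x ^ 2 ∂P₀) - m₀ ^ 2 := by
    rw [variance_eq_sub hT0]; simp [Pi.pow_apply, hm0]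
  have hvd1 : variance T P₁ = (∫ x, T x ^ 2 ∂P₁) - m₁ ^ 2 := by
    rw [variance_eq_sub hT1]; simp [Pi.pow_apply, hm1]
  have hsq0 : m₀ ^ 2 - 2 * c * m₀ + c ^ 2 = μ ^ 2 / 4 := by
    rw [hcdef]; linear_combination hmean / 4
  have hsq1 : m₁ ^ 2 - 2 * c * m₁ + c ^ 2 = μ ^ 2 / 4 := by
    rw [hcdef]; linear_combination hmean / 4
  have key20 : ∫ x, f x ^ 2 ∂P₀ ≤ σ ^ 2 + μ ^ 2 / 4 := by
    rw [hexp0]; linarith [hvd0, hvar0, hsq0]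
  have key21 : ∫ x, f x ^ 2 ∂P₁ ≤ σ ^ 2 + μ ^ 2 / 4 := by
    rw [hexp1]; linarith [hvd1, hvar1, hsq1]
  -- change of measure facts
  have hipf : Integrable (fun x => p x * f x) P₁ := by
    have := (MeasureTheory.integrable_rnDeriv_smul_iff (E := ℝ) hac).mpr hfi0
    simpa only [smul_eq_mul] using this
  have hipf2 : Integrable (fun x => p x * f x ^ 2) P₁ := by
    have := (MeasureTheory.integrable_rnDeriv_smul_iff (E := ℝ) hac).mpr hfsq0
    simpa only [smul_eq_mul] using this
  have hintf0 : ∫ x, p x * f x ∂P₁ = ∫ x, f x ∂P₀ := by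
    have := MeasureTheory.integral_rnDeriv_smul (E := ℝ) hac (f := f)
    simpa only [smul_eq_mul] using this
  have hintf20 : ∫ x, p x * f x ^ 2 ∂P₁ = ∫ x, f x ^ 2 ∂P₀ := by
    have := MeasureTheory.integral_rnDeriv_smul (E := ℝ) hac (f := fun x => f x ^ 2)
    simpa only [smul_eq_mul] using this
  -- the two Cauchy–Schwarz factors
  set u := fun x => g x - 1 with hudef
  set v := fun x => f x * (g x + 1) with hvdef
  have huv : ∀ x, u x * v x = p x * f x - f x := fun x => by
    simp only [hudef, hvdef]; linear_combination f x * (hgsq x)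
  have hintuv : ∫ x, u x * v x ∂P₁ = m₀ - m₁ := by
    have e0 : ∫ x, f x ∂P₀ = m₀ - c := by
      have h1 : ∫ x, f x ∂P₀ = (∫ x, T x ∂P₀) - ∫ _x, (c : ℝ) ∂P₀ :=
        integral_sub hTi0 (integrable_const c)
      rw [h1, hm0]; simp
    have e1 : ∫ x, f x ∂P₁ = m₁ - c := by
      have h1 : ∫ x, f x ∂P₁ = (∫ x, T x ∂P₁) - ∫ _x, (c : ℝ) ∂P₁ :=
        integral_sub hTi1 (integrable_const c)
      rw [h1, hm1]; simp
    have h2 : ∫ x, u x * v x ∂P₁ = ∫ x, (p x * f x - f x) ∂P₁ :=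
      integral_congr_ae (Filter.Eventually.of_forall huv)
    have h3 : ∫ x, (p x * f x - f x) ∂P₁ = (∫ x, p x * f x ∂P₁) - ∫ x, f x ∂P₁ :=
      integral_sub hipf hfi1
    rw [h2, h3, hintf0, e0, e1]; ring
  have humeas : Measurable u := hgmeas.sub measurable_const
  have hvmeas : Measurable v := (hT.sub measurable_const).mul (hgmeas.add measurable_const)
  have hu2 : Integrable (fun x => u x ^ 2) P₁ := by
    refine ((hip.const_mul 2).add (integrable_const 2)).mono'
      (humeas.pow_const 2).aestronglyMeasurable ?_
    filter_upwards with x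
    simp only [Pi.add_apply]
    rw [Real.norm_of_nonneg (sq_nonneg _)]
    simp only [hudef]
    rw [← hgsq x]
    nlinarith [sq_nonneg (g x + 1)]
  have hv2 : Integrable (fun x => v x ^ 2) P₁ := by
    refine ((hipf2.const_mul 2).add (hfsq1.const_mul 2)).mono'
      (hvmeas.pow_const 2).aestronglyMeasurable ?_
    filter_upwards with x
    simp only [Pi.add_apply]
    rw [Real.norm_of_nonneg (sq_nonneg _)]
    simp only [hvdef]
    rw [← hgsq x]
    nlinarith [sq_nonneg (f x * (g x - 1))]
  have hu2m : MemLp u 2 P₁ :=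
    (memLp_two_iff_integrable_sq humeas.aestronglyMeasurable).mpr hu2
  have hv2m : MemLp v 2 P₁ :=
    (memLp_two_iff_integrable_sq hvmeas.aestronglyMeasurable).mpr hv2
  have hu2val : ∫ x, u x ^ 2 ∂P₁ = 2 - 2 * ∫ x, g x ∂P₁ := by
    have h1 : ∀ x, u x ^ 2 = p x - 2 * g x + 1 := fun x => by
      simp only [hudef]; linear_combination hgsq x
    have e1 : ∫ x, u x ^ 2 ∂P₁ = ∫ x, (p x - 2 * g x + 1) ∂P₁ :=
      integral_congr_ae (Filter.Eventually.of_forall h1)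
    have e2 : ∫ x, (p x - 2 * g x + 1) ∂P₁
        = (∫ x, (p x - 2 * g x) ∂P₁) + ∫ _x, (1 : ℝ) ∂P₁ :=
      integral_add (hip.sub (hig.const_mul 2)) (integrable_const 1)
    have e3 : ∫ x, (p x - 2 * g x) ∂P₁ = (∫ x, p x ∂P₁) - ∫ x, 2 * g x ∂P₁ :=
      integral_sub hip (hig.const_mul 2)
    have e4 : ∫ x, 2 * g x ∂P₁ = 2 * ∫ x, g x ∂P₁ := by rw [integral_const_mul]
    have e5 : ∫ _x, (1 : ℝ) ∂P₁ = 1 := by simp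
    rw [e1, e2, e3, e4, e5, hipint]; ring
  have hv2bound : ∫ x, v x ^ 2 ∂P₁ ≤ 4 * σ ^ 2 + μ ^ 2 := by
    have hle : ∀ x, v x ^ 2 ≤ 2 * (p x * f x ^ 2) + 2 * f x ^ 2 := fun x => by
      simp only [hvdef]
      rw [← hgsq x]
      nlinarith [sq_nonneg (f x * (g x - 1))]
    have hb : Integrable (fun x => 2 * (p x * f x ^ 2) + 2 * f x ^ 2) P₁ :=
      (hipf2.const_mul 2).add (hfsq1.const_mul 2)
    have hmono := integral_mono hv2 hb hle
    have e2 : ∫ x, (2 * (p x * f x ^ 2) + 2 * f x ^ 2) ∂P₁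
        = (∫ x, 2 * (p x * f x ^ 2) ∂P₁) + ∫ x, 2 * f x ^ 2 ∂P₁ :=
      integral_add (hipf2.const_mul 2) (hfsq1.const_mul 2)
    have e3 : ∫ x, 2 * (p x * f x ^ 2) ∂P₁ = 2 * ∫ x, p x * f x ^ 2 ∂P₁ := by
      rw [integral_const_mul]
    have e4 : ∫ x, 2 * f x ^ 2 ∂P₁ = 2 * ∫ x, f x ^ 2 ∂P₁ := by rw [integral_const_mul]
    rw [e2, e3, e4, hintf20] at hmono
    linarith [key20, key21]
  -- Cauchy–Schwarz
  have hcs := integral_sq_cauchy P₁ u v hu2m hv2m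
  rw [hintuv, hu2val] at hcs
  have h0 : 0 ≤ ∫ x, u x ^ 2 ∂P₁ := integral_nonneg fun x => sq_nonneg _
  rw [hu2val] at h0
  have hμle : μ ^ 2 ≤ (2 - 2 * ∫ x, g x ∂P₁) * (4 * σ ^ 2 + μ ^ 2) := by
    calc μ ^ 2 = (m₀ - m₁) ^ 2 := hmean.symm
      _ ≤ (2 - 2 * ∫ x, g x ∂P₁) * ∫ x, v x ^ 2 ∂P₁ := hcs
      _ ≤ (2 - 2 * ∫ x, g x ∂P₁) * (4 * σ ^ 2 + μ ^ 2) :=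
          mul_le_mul_of_nonneg_left hv2bound h0
  -- lower bound on the KL integral
  have heq : (fun x => (P₀.rnDeriv P₁ x).toReal • (g x)⁻¹) = g := by
    funext x
    simp only [smul_eq_mul]
    show p x * (g x)⁻¹ = g x
    rcases eq_or_lt_of_le (hg0 x) with h | h
    · rw [← hgsq x, ← h]; simp
    · rw [← hgsq x, sq, mul_inv_cancel_right₀ h.ne']
  have hinvint : Integrable (fun x => (g x)⁻¹) P₀ := by
    refine (MeasureTheory.integrable_rnDeriv_smul_iff (E := ℝ) hac).mp ?_
    rw [heq]; exact hig
  have hinvval : ∫ x, g x ∂P₁ = ∫ x, (g x)⁻¹ ∂P₀ := by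
    rw [← MeasureTheory.integral_rnDeriv_smul (E := ℝ) hac (f := fun x => (g x)⁻¹)]
    exact integral_congr_ae (Filter.Eventually.of_forall fun x => congrFun heq.symm x)
  have hlog : (fun x => 2 - 2 * (g x)⁻¹) ≤ᵐ[P₀] llr P₀ P₁ := by
    filter_upwards [Measure.rnDeriv_pos hac, hac.ae_le (Measure.rnDeriv_lt_top P₀ P₁)]
      with x hpos hlt
    have hpx : 0 < p x := ENNReal.toReal_pos hpos.ne' hlt.ne
    have hgx : 0 < g x := Real.sqrt_pos.mpr hpx
    have h1 : Real.log (g x)⁻¹ ≤ (g x)⁻¹ - 1 :=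
      Real.log_le_sub_one_of_pos (inv_pos.mpr hgx)
    rw [Real.log_inv] at h1
    have h2 : llr P₀ P₁ x = 2 * Real.log (g x) := by
      show Real.log (p x) = 2 * Real.log (g x)
      rw [← hgsq x, Real.log_pow]
      push_cast; ring
    rw [h2]
    linarith
  have hD : 2 - 2 * ∫ x, g x ∂P₁ ≤ ∫ x, llr P₀ P₁ x ∂P₀ := by
    have hcint : Integrable (fun x => (2:ℝ) - 2 * (g x)⁻¹) P₀ :=
      (integrable_const (2:ℝ)).sub (hinvint.const_mul 2)
    have hmono := integral_mono_ae hcint hint hlog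
    have e1 : ∫ x, (2 - 2 * (g x)⁻¹ : ℝ) ∂P₀
        = (∫ _x, (2 : ℝ) ∂P₀) - ∫ x, 2 * (g x)⁻¹ ∂P₀ :=
      integral_sub (integrable_const 2) (hinvint.const_mul 2)
    have e2 : ∫ x, 2 * (g x)⁻¹ ∂P₀ = 2 * ∫ x, (g x)⁻¹ ∂P₀ := by rw [integral_const_mul]
    have e3 : ∫ _x, (2 : ℝ) ∂P₀ = 2 := by simp
    rw [e1, e2, e3] at hmono
    rw [hinvval]
    linarith
  -- conclusion
  have hden : 0 ≤ 4 * σ ^ 2 + μ ^ 2 := by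
    linarith [variance_nonneg T P₀, hvar0, sq_nonneg μ]
  rcases eq_or_lt_of_le hden with hd0 | hdpos
  · rw [← hd0, div_zero]
    linarith
  · rw [div_le_iff₀ hdpos]
    have hmm := mul_le_mul_of_nonneg_right hD hden
    linarith
end

section
/- Upper bound on moment tensor differences: For any integer m ≥ 1 and any θ, φ ∈ ℝ^L with ‖θ‖ = 1 and ρ(θ, φ) ≤ 1/3, the difference of m-th moment tensors satisfies ‖E[(Gθ)^{⊗m}] − E[(Gφ)^{⊗m}]‖² ≤ 12 · 2^m · ρ(θ, φ)², where the expectation is over G drawn from the Haar probability measure on 𝒢 and ‖·‖ is the Hilbert–Schmidt norm. In particular (the deterministic core of the proof), if ‖θ − φ‖ = ρ(θ, φ) = ε ≤ 1/3 then ‖θ^{⊗m} − φ^{⊗m}‖² = 1 − 2⟨θ, φ⟩^m + ‖φ‖^{2m} ≤ 12 · 2^m ε². -/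
open MeasureTheory Real Finset

noncomputable section

/-- Euclidean inner product on `Fin L → ℝ`. -/
def dotp {L : ℕ} (v w : Fin L → ℝ) : ℝ := ∑ i, v i * w i

/-- Action of `g ∈ G` on `ℝ^L` through an orthogonal representation `π`. -/
def act (L : ℕ) {G : Type} [Group G] (rep : G →* Matrix.orthogonalGroup (Fin L) ℝ)
    (g : G) (v : Fin L → ℝ) : Fin L → ℝ :=
  (rep g : Matrix (Fin L) (Fin L) ℝ).mulVec v

/-- Lebesgue density of `P_θ`: Gaussian mixture over `g ~ μ` (Haar on `𝒢`). -/
def densG (L : ℕ) {G : Type} [Group G] [MeasurableSpace G] (μ : Measure G)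
    (rep : G →* Matrix.orthogonalGroup (Fin L) ℝ) (σ : ℝ) (θ y : Fin L → ℝ) : ℝ :=
  ∫ g, gaussDens L σ (y - act L rep g θ) ∂μ

/-- The law `P_θ` of `Y = Gθ + σξ`, `G ~ μ` Haar on `𝒢`, `ξ ~ N(0, I_L)` independent. -/
def PG (L : ℕ) {G : Type} [Group G] [MeasurableSpace G] (μ : Measure G)
    (rep : G →* Matrix.orthogonalGroup (Fin L) ℝ) (σ : ℝ) (θ : Fin L → ℝ) :
    Measure (Fin L → ℝ) :=
  volume.withDensity fun y => ENNReal.ofReal (densG L μ rep σ θ y)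

/-- Kullback-Leibler divergence `D(θ‖φ) = D(P_θ‖P_φ)`. -/
def KLG (L : ℕ) {G : Type} [Group G] [MeasurableSpace G] (μ : Measure G)
    (rep : G →* Matrix.orthogonalGroup (Fin L) ℝ) (σ : ℝ) (θ φ : Fin L → ℝ) : ℝ :=
  ∫ y, Real.log (densG L μ rep σ θ y / densG L μ rep σ φ y) ∂(PG L μ rep σ θ)

/-- Orbit distance `ρ(φ, θ) = min_{G ∈ 𝒢} ‖φ - Gθ‖`. -/
def rhoG (L : ℕ) {G : Type} [Group G] (rep : G →* Matrix.orthogonalGroup (Fin L) ℝ)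
    (φ θ : Fin L → ℝ) : ℝ :=
  ⨅ g : G, nrm (φ - act L rep g θ)

/-- Squared Hilbert-Schmidt norm of `Δ_m = E[(Gθ)^{⊗m}] - E[(Gφ)^{⊗m}]`. -/
def DeltaSq (L : ℕ) {G : Type} [Group G] [MeasurableSpace G] (μ : Measure G)
    (rep : G →* Matrix.orthogonalGroup (Fin L) ℝ) (m : ℕ) (θ φ : Fin L → ℝ) : ℝ :=
  ∑ j : Fin m → Fin L,
    ((∫ g, ∏ i, act L rep g θ (j i) ∂μ) - (∫ g, ∏ i, act L rep g φ (j i) ∂μ)) ^ 2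

/- ### Auxiliary arithmetic lemmas -/

lemma pow_sub_pow_le' (b t : ℝ) (hb : 0 ≤ b) (ht : |t| ≤ b) :
    ∀ n : ℕ, b ^ (n + 1) - t ^ (n + 1) ≤ (n + 1) * b ^ n * (b - t)
  | 0 => by simp
  | n + 1 => by
    have ih := pow_sub_pow_le' b t hb ht n
    have h1 : t ^ (n + 1) ≤ b ^ (n + 1) := by
      calc t ^ (n+1) ≤ |t ^ (n+1)| := le_abs_self _
        _ = |t| ^ (n+1) := by rw [abs_pow]
        _ ≤ b ^ (n+1) := pow_le_pow_left₀ (abs_nonneg t) ht _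
    have h2 : 0 ≤ b - t := by
      have := le_abs_self t; linarith
    have k1 : b * (b^(n+1) - t^(n+1)) ≤ ((n:ℝ)+1) * b^(n+1) * (b-t) := by
      calc b * (b^(n+1)-t^(n+1)) ≤ b * (((n:ℝ)+1)*b^n*(b-t)) :=
            mul_le_mul_of_nonneg_left ih hb
        _ = ((n:ℝ)+1)*b^(n+1)*(b-t) := by ring
    have k2 : t^(n+1)*(b-t) ≤ b^(n+1)*(b-t) := mul_le_mul_of_nonneg_right h1 h2
    have e : b^(n+2) - t^(n+2) = b*(b^(n+1)-t^(n+1)) + t^(n+1)*(b-t) := by ring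
    push_cast
    show b ^ (n+2) - t ^ (n+2) ≤ (((n:ℝ)+1) + 1) * b ^ (n+1) * (b - t)
    have hbt : 0 ≤ b^(n+1)*(b-t) := mul_nonneg (pow_nonneg hb _) h2
    linarith

lemma convex_pow_bound (δ : ℝ) (h0 : 0 ≤ δ) (h1 : δ ≤ 1/3) :
    ∀ m : ℕ, (1 + δ) ^ m ≤ 1 + 3 * δ * ((4/3 : ℝ) ^ m - 1)
  | 0 => by simp
  | m + 1 => by
    have ih := convex_pow_bound δ h0 h1 m
    have hA : (1:ℝ) ≤ (4/3 : ℝ) ^ m := one_le_pow₀ (by norm_num)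
    have hd : (0:ℝ) ≤ 1 + δ := by linarith
    have h2 : (1+δ)*(1+δ)^m ≤ (1+δ)*(1 + 3*δ*((4/3:ℝ)^m - 1)) :=
      mul_le_mul_of_nonneg_left ih hd
    have e0 : (1+δ)^(m+1) = (1+δ)*(1+δ)^m := by ring
    have e : (4/3 : ℝ) ^ (m+1) = (4/3) * (4/3:ℝ)^m := by ring
    nlinarith [mul_nonneg (mul_nonneg h0 (sub_nonneg.2 hA)) (by linarith : (0:ℝ) ≤ 1 - 3*δ)]

lemma m_mul_pow_le : ∀ n : ℕ, ((n:ℝ) + 1) * (4/3) ^ n ≤ 2 ^ (n + 1)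
  | 0 => by norm_num
  | 1 => by norm_num
  | n + 2 => by
    have ih := m_mul_pow_le (n + 1)
    have hp : (0:ℝ) < (4/3 : ℝ) ^ (n+1) := by positivity
    have e1 : ((4:ℝ)/3) ^ (n+2) = (4/3) * (4/3:ℝ)^(n+1) := by ring
    have e2 : (2:ℝ) ^ (n+3) = 2 * 2 ^ (n+2) := by ring
    push_cast at ih ⊢
    nlinarith [ih, hp]

lemma nat_sq_le (m : ℕ) : m ^ 2 ≤ 9 * 2 ^ m := by
  induction m with
  | zero => norm_num
  | succ n ih =>
    have h1 : n < 2 ^ n := Nat.lt_two_pow_self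
    have e : 2^(n+1) = 2*2^n := by rw [pow_succ]; ring
    nlinarith [ih, h1]

/-- The central scalar estimate. -/
lemma quant_bound (m : ℕ) (b t ε : ℝ) (hb0 : 0 ≤ b) (hε0 : 0 ≤ ε) (hε : ε ≤ 1/3)
    (hεsq : ε ^ 2 = 1 - 2 * t + b ^ 2) (hcs : t ^ 2 ≤ b ^ 2) :
    1 - 2 * t ^ m + b ^ (2 * m) ≤ 12 * 2 ^ m * ε ^ 2 := by
  have htabs : |t| ≤ b := by rw [abs_le]; constructor <;> nlinarith
  have htb : t ≤ b := le_trans (le_abs_self t) htabs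
  have hbt : b - t ≤ ε ^ 2 / 2 := by nlinarith [sq_nonneg (1 - b)]
  have hbt0 : 0 ≤ b - t := by linarith
  have hb1 : (1 - b) ^ 2 ≤ ε ^ 2 := by nlinarith
  have hbub : b ≤ 1 + ε := by nlinarith
  have hblb : 1 - ε ≤ b := by nlinarith
  have hb43 : b ≤ 4/3 := by linarith
  have hQ : 1 - 2 * t ^ m + b ^ (2 * m) = (1 - b ^ m) ^ 2 + 2 * (b ^ m - t ^ m) := by
    rw [pow_mul]; ring
  have hmb : (m : ℝ) * b ^ (m - 1) ≤ 2 ^ m := by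
    rcases m with _ | n
    · norm_num
    · have h2 : b ^ n ≤ (4/3 : ℝ) ^ n := pow_le_pow_left₀ hb0 hb43 n
      have h3 := m_mul_pow_le n
      have h4 : ((n:ℝ) + 1) * b ^ n ≤ ((n:ℝ) + 1) * (4/3) ^ n :=
        mul_le_mul_of_nonneg_left h2 (by positivity)
      show ((n+1 : ℕ) : ℝ) * b ^ (n + 1 - 1) ≤ 2 ^ (n+1)
      push_cast
      simpa using le_trans h4 h3
  have h1 : 2 * (b ^ m - t ^ m) ≤ 2 ^ m * ε ^ 2 := by
    rcases m with _ | n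
    · norm_num; positivity
    · have hp := pow_sub_pow_le' b t hb0 htabs n
      have step : b ^ (n+1) - t ^ (n+1) ≤ ((n:ℝ)+1) * b ^ n * (ε^2/2) := by
        calc b ^ (n+1) - t ^ (n+1) ≤ ((n:ℝ)+1) * b ^ n * (b - t) := hp
          _ ≤ ((n:ℝ)+1) * b ^ n * (ε^2/2) := by
              apply mul_le_mul_of_nonneg_left hbt (by positivity)
      have hmb' : ((n:ℝ)+1) * b ^ n ≤ 2 ^ (n+1) := by
        have := hmb
        push_cast at this
        simpa using this
      have hε2' : (0:ℝ) ≤ ε^2/2 := by positivity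
      have := mul_le_mul_of_nonneg_right hmb' hε2'
      linarith [le_trans step this]
  have h2 : (1 - b ^ m) ^ 2 ≤ 9 * 2 ^ m * ε ^ 2 := by
    have h9 : (m : ℝ) ^ 2 ≤ 9 * 2 ^ m := by
      have := nat_sq_le m
      have h' : ((m ^ 2 : ℕ) : ℝ) ≤ ((9 * 2 ^ m : ℕ) : ℝ) := Nat.cast_le.mpr this
      push_cast at h'
      exact h'
    rcases le_total b 1 with hble | hbge
    · have hup : 1 - b ^ m ≤ (m : ℝ) * ε := by
        rcases m with _ | n
        · norm_num
        · have hp := pow_sub_pow_le' 1 b (by norm_num) (by rw [abs_of_nonneg hb0]; exact hble) n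
          rw [one_pow, one_pow, mul_one] at hp
          have hbe : 1 - b ≤ ε := by linarith
          calc (1:ℝ) - b ^ (n+1) ≤ ((n:ℝ)+1) * (1 - b) := hp
            _ ≤ ((n:ℝ)+1) * ε := mul_le_mul_of_nonneg_left hbe (by positivity)
            _ = ((n+1:ℕ):ℝ) * ε := by push_cast; ring
      have hlo : 0 ≤ 1 - b ^ m := by
        have : b ^ m ≤ 1 := pow_le_one₀ hb0 hble
        linarith
      have := pow_le_pow_left₀ hlo hup 2
      calc (1 - b ^ m) ^ 2 ≤ ((m:ℝ) * ε) ^ 2 := this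
        _ = (m:ℝ)^2 * ε^2 := by ring
        _ ≤ 9 * 2 ^ m * ε ^ 2 := mul_le_mul_of_nonneg_right h9 (sq_nonneg ε)
    · have hδ0 : 0 ≤ b - 1 := by linarith
      have hδε : b - 1 ≤ ε := by linarith
      have hδ13 : b - 1 ≤ 1/3 := by linarith
      have hcb := convex_pow_bound (b - 1) hδ0 hδ13 m
      rw [show (1 : ℝ) + (b - 1) = b by ring] at hcb
      have hA1 : (1:ℝ) ≤ (4/3 : ℝ) ^ m := one_le_pow₀ (by norm_num)
      have hup : b ^ m - 1 ≤ 3 * ε * (4/3 : ℝ) ^ m := by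
        have hA0 : (0:ℝ) ≤ (4/3:ℝ)^m := by positivity
        have k : (b-1) * (4/3:ℝ)^m ≤ ε * (4/3:ℝ)^m := mul_le_mul_of_nonneg_right hδε hA0
        nlinarith [hcb, k, hδ0]
      have hlo : 0 ≤ b ^ m - 1 := by
        have : (1:ℝ) ≤ b ^ m := one_le_pow₀ hbge
        linarith
      have hsq : (b ^ m - 1) ^ 2 ≤ (3 * ε * (4/3:ℝ)^m) ^ 2 := pow_le_pow_left₀ hlo hup 2
      have h169 : ((16:ℝ)/9) ^ m ≤ 2 ^ m := pow_le_pow_left₀ (by norm_num) (by norm_num) m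
      calc (1 - b ^ m) ^ 2 = (b ^ m - 1) ^ 2 := by ring
        _ ≤ (3 * ε * (4/3:ℝ)^m) ^ 2 := hsq
        _ = 9 * (16/9 : ℝ)^m * ε^2 := by
            rw [show ((16:ℝ)/9) = (4/3)^2 by norm_num, ← pow_mul, mul_comm 2 m, pow_mul]
            ring
        _ ≤ 9 * 2 ^ m * ε ^ 2 := by
            have : (9:ℝ) * (16/9:ℝ)^m ≤ 9 * 2^m := by linarith
            exact mul_le_mul_of_nonneg_right this (sq_nonneg ε)
  have hpos : (0:ℝ) ≤ 2 ^ m * ε ^ 2 := by positivity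
  rw [hQ]
  linarith [h1, h2, hpos]

/- ### Multinomial expansion -/

lemma sum_pow_eq {L : ℕ} (m : ℕ) (h : Fin L → ℝ) :
    (∑ x, h x) ^ m = ∑ j : Fin m → Fin L, ∏ i, h (j i) := by
  rw [← Fintype.piFinset_univ, ← Finset.prod_univ_sum]
  simp [Finset.prod_const]

/-- Deterministic core of the theorem. -/
lemma detCore {L : ℕ} (m : ℕ) (θ φ : Fin L → ℝ) (hθ : nrm θ = 1) (hε : nrm (θ - φ) ≤ 1/3) :
    (∑ j : Fin m → Fin L, ((∏ i, θ (j i)) - ∏ i, φ (j i)) ^ 2) =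
        1 - 2 * (dotp θ φ) ^ m + (nrm φ) ^ (2 * m) ∧
    (∑ j : Fin m → Fin L, ((∏ i, θ (j i)) - ∏ i, φ (j i)) ^ 2) ≤
        12 * 2 ^ m * (nrm (θ - φ)) ^ 2 := by
  have hb0 : 0 ≤ nrm φ := Real.sqrt_nonneg _
  have hε0 : 0 ≤ nrm (θ - φ) := Real.sqrt_nonneg _
  have hS : ∑ i, θ i ^ 2 = 1 := Real.sqrt_eq_one.mp hθ
  have hb2 : (nrm φ) ^ 2 = ∑ i, φ i ^ 2 := Real.sq_sqrt (by positivity)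
  have ht' : dotp θ φ = ∑ i, θ i * φ i := rfl
  have hε2 : (nrm (θ - φ)) ^ 2 = ∑ i, (θ i - φ i) ^ 2 := by
    have : (nrm (θ - φ)) ^ 2 = ∑ i, (θ - φ) i ^ 2 := Real.sq_sqrt (by positivity)
    simpa [Pi.sub_apply] using this
  have expand : ∑ i, (θ i - φ i) ^ 2 =
      (∑ i, θ i ^ 2) - 2 * (∑ i, θ i * φ i) + ∑ i, φ i ^ 2 := by
    rw [Finset.mul_sum, ← Finset.sum_sub_distrib, ← Finset.sum_add_distrib]
    exact Finset.sum_congr rfl fun i _ => by ring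
  have hεsq : (nrm (θ - φ)) ^ 2 = 1 - 2 * dotp θ φ + (nrm φ) ^ 2 := by
    rw [hε2, expand, hS, ← hb2, ht']
  have hcs : (dotp θ φ) ^ 2 ≤ (nrm φ) ^ 2 := by
    have h := Finset.sum_mul_sq_le_sq_mul_sq Finset.univ θ φ
    rw [hS, one_mul, ← hb2] at h
    rw [ht']; exact h
  have hid : (∑ j : Fin m → Fin L, ((∏ i, θ (j i)) - ∏ i, φ (j i)) ^ 2) =
      1 - 2 * (dotp θ φ) ^ m + (nrm φ) ^ (2 * m) := by
    have e : ∀ j : Fin m → Fin L, ((∏ i, θ (j i)) - ∏ i, φ (j i)) ^ 2 =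
        (∏ i, θ (j i) ^ 2) - 2 * ∏ i, (θ (j i) * φ (j i)) + ∏ i, φ (j i) ^ 2 := by
      intro j
      rw [Finset.prod_mul_distrib, Finset.prod_pow, Finset.prod_pow]; ring
    rw [Finset.sum_congr rfl fun j _ => e j, Finset.sum_add_distrib,
      Finset.sum_sub_distrib, ← Finset.mul_sum,
      ← sum_pow_eq m (fun x => θ x ^ 2), ← sum_pow_eq m (fun x => θ x * φ x),
      ← sum_pow_eq m (fun x => φ x ^ 2), hS, one_pow, ← ht', ← hb2, ← pow_mul]
  refine ⟨hid, ?_⟩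
  rw [hid]
  exact quant_bound m (nrm φ) (dotp θ φ) (nrm (θ - φ)) hb0 hε0 hε hεsq hcs

/- ### Properties of the orthogonal action -/

section ActionFacts

variable {L : ℕ} {G : Type} [Group G]
  (rep : G →* Matrix.orthogonalGroup (Fin L) ℝ)

lemma act_dotp (g : G) (v w : Fin L → ℝ) :
    dotp (act L rep g v) (act L rep g w) = dotp v w := by
  have hA : star ((rep g : Matrix (Fin L) (Fin L) ℝ)) * (rep g : Matrix (Fin L) (Fin L) ℝ) = 1 :=
    (rep g).2.1
  have hst : star ((rep g : Matrix (Fin L) (Fin L) ℝ)) =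
      Matrix.transpose ((rep g : Matrix (Fin L) (Fin L) ℝ)) := by
    rw [Matrix.star_eq_conjTranspose, Matrix.conjTranspose_eq_transpose_of_trivial]
  rw [hst] at hA
  show dotProduct (Matrix.mulVec _ v) (Matrix.mulVec _ w) = dotProduct v w
  rw [Matrix.dotProduct_mulVec, ← Matrix.mulVec_transpose, Matrix.mulVec_mulVec, hA,
    Matrix.one_mulVec]

lemma act_nrm (g : G) (v : Fin L → ℝ) : nrm (act L rep g v) = nrm v := by
  have e : ∀ u : Fin L → ℝ, nrm u = Real.sqrt (dotp u u) := by
    intro u; unfold nrm dotp; congr 1; exact Finset.sum_congr rfl fun i _ => by ring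
  rw [e, e, act_dotp]

lemma act_sub (g : G) (v w : Fin L → ℝ) :
    act L rep g (v - w) = act L rep g v - act L rep g w := Matrix.mulVec_sub _ _ _

lemma act_comp (g h : G) (v : Fin L → ℝ) :
    act L rep g (act L rep h v) = act L rep (g * h) v := by
  unfold act
  rw [Matrix.mulVec_mulVec, _root_.map_mul]
  norm_cast

lemma act_continuous [TopologicalSpace G] (hrep : Continuous fun g : G => (rep g : Matrix (Fin L) (Fin L) ℝ))
    (v : Fin L → ℝ) (i : Fin L) : Continuous fun g => act L rep g v i := by
  unfold act
  simp only [Matrix.mulVec, dotProduct]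
  exact continuous_finset_sum _ fun k _ =>
    (((continuous_apply k).comp ((continuous_apply i).comp hrep)).mul continuous_const)

lemma nrm_act_continuous [TopologicalSpace G] (hrep : Continuous fun g : G => (rep g : Matrix (Fin L) (Fin L) ℝ))
    (θ v : Fin L → ℝ) : Continuous fun g => nrm (θ - act L rep g v) := by
  unfold nrm
  apply Real.continuous_sqrt.comp
  apply continuous_finset_sum _ fun i _ => ?_
  have : Continuous fun g => θ i - act L rep g v i :=
    continuous_const.sub (act_continuous rep hrep v i)
  exact (this.pow 2 : Continuous fun g => (θ i - act L rep g v i) ^ 2)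

end ActionFacts

/-- **Lemma (upper bound on moment tensor differences).**
For any `m ≥ 1` and `θ, φ ∈ ℝ^L` with `‖θ‖ = 1` and `ρ(θ, φ) ≤ 1/3`,
`‖E[(Gθ)^{⊗m}] - E[(Gφ)^{⊗m}]‖² ≤ 12 · 2^m ρ(θ, φ)²`. Moreover (deterministic core), if
`‖θ - φ‖ = ρ(θ, φ) = ε ≤ 1/3`, then
`‖θ^{⊗m} - φ^{⊗m}‖² = 1 - 2⟨θ, φ⟩^m + ‖φ‖^{2m} ≤ 12 · 2^m ε²`. -/
theorem moment_tensor_difference_upper_bound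
    (L : ℕ) (G : Type) [Group G] [TopologicalSpace G] [IsTopologicalGroup G]
    [CompactSpace G] [MeasurableSpace G] [BorelSpace G]
    (μ : Measure G) [IsProbabilityMeasure μ] [μ.IsHaarMeasure]
    (rep : G →* Matrix.orthogonalGroup (Fin L) ℝ)
    (hrep : Continuous fun g : G => (rep g : Matrix (Fin L) (Fin L) ℝ))
    (m : ℕ) (hm : 1 ≤ m) (θ φ : Fin L → ℝ) (hθ : nrm θ = 1) :
    (rhoG L rep θ φ ≤ 1 / 3 →
      DeltaSq L μ rep m θ φ ≤ 12 * 2 ^ m * (rhoG L rep θ φ) ^ 2) ∧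
    (nrm (θ - φ) = rhoG L rep θ φ → nrm (θ - φ) ≤ 1 / 3 →
      (∑ j : Fin m → Fin L, ((∏ i, θ (j i)) - ∏ i, φ (j i)) ^ 2) =
          1 - 2 * (dotp θ φ) ^ m + (nrm φ) ^ (2 * m) ∧
        (∑ j : Fin m → Fin L, ((∏ i, θ (j i)) - ∏ i, φ (j i)) ^ 2) ≤
          12 * 2 ^ m * (nrm (θ - φ)) ^ 2) := by
  constructor
  · -- probabilistic part
    intro hρ
    -- right invariance of μ
    have hinv : μ.IsMulRightInvariant := by
      constructor
      intro g₀
      have h1 : IsProbabilityMeasure (μ.map (· * g₀)) :=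
        Measure.isProbabilityMeasure_map (measurable_mul_const g₀).aemeasurable
      have h2 : (μ.map (· * g₀)).IsOpenPosMeasure :=
        (continuous_mul_right g₀).isOpenPosMeasure_map (fun x => ⟨x * g₀⁻¹, by simp⟩)
      have h3 : (μ.map (· * g₀)).IsHaarMeasure := ⟨⟩
      exact Measure.isHaarMeasure_eq_of_isProbabilityMeasure _ μ
    -- continuity and integrability
    have hprodc : ∀ (v : Fin L → ℝ) (j : Fin m → Fin L),
        Continuous fun g => ∏ i, act L rep g v (j i) := fun v j =>
      continuous_finset_prod _ fun i _ => act_continuous rep hrep v (j i)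
    have hcs : ∀ f : G → ℝ, HasCompactSupport f := fun f =>
      IsCompact.of_isClosed_subset isCompact_univ (isClosed_tsupport _) (Set.subset_univ _)
    have hint : ∀ (v : Fin L → ℝ) (j : Fin m → Fin L),
        Integrable (fun g => ∏ i, act L rep g v (j i)) μ := fun v j =>
      (hprodc v j).integrable_of_hasCompactSupport (hcs _)
    -- Jensen's inequality for the square
    have jensen : ∀ f : G → ℝ, Continuous f →
        (∫ g, f g ∂μ) ^ 2 ≤ ∫ g, (f g) ^ 2 ∂μ := by
      intro f hf
      have hm2 : MemLp f 2 μ := hf.memLp_of_hasCompactSupport (hcs f)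
      have hv := ProbabilityTheory.variance_nonneg f μ
      rw [ProbabilityTheory.variance_eq_sub hm2] at hv
      have : (∫ g, (f ^ 2) g ∂μ) = ∫ g, (f g) ^ 2 ∂μ := by
        simp [Pi.pow_apply]
      simp only [Pi.pow_apply] at hv
      linarith
    -- the minimizer
    obtain ⟨g₀, -, hg₀⟩ := isCompact_univ.exists_isMinOn ⟨(1:G), Set.mem_univ 1⟩
      ((nrm_act_continuous rep hrep θ φ).continuousOn)
    have hbdd : BddBelow (Set.range fun g : G => nrm (θ - act L rep g φ)) := by
      refine ⟨0, fun x hx => ?_⟩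
      obtain ⟨g, rfl⟩ := hx
      exact Real.sqrt_nonneg _
    have hattain : rhoG L rep θ φ = nrm (θ - act L rep g₀ φ) := by
      apply le_antisymm
      · exact ciInf_le hbdd g₀
      · exact le_ciInf fun g => hg₀ (Set.mem_univ g)
    set φ' := act L rep g₀ φ with hφ'
    -- invariance of the moment integral
    have hswap : ∀ j : Fin m → Fin L,
        (∫ g, ∏ i, act L rep g φ' (j i) ∂μ) = ∫ g, ∏ i, act L rep g φ (j i) ∂μ := by
      intro j
      have e : ∀ g : G, (∏ i, act L rep g φ' (j i)) =
          (fun h => ∏ i, act L rep h φ (j i)) (g * g₀) := by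
        intro g
        simp only [hφ', act_comp]
      calc (∫ g, ∏ i, act L rep g φ' (j i) ∂μ)
          = ∫ g, (fun h => ∏ i, act L rep h φ (j i)) (g * g₀) ∂μ := by
            exact integral_congr_ae (Filter.Eventually.of_forall e)
        _ = ∫ g, ∏ i, act L rep g φ (j i) ∂μ :=
            integral_mul_right_eq_self (fun h => ∏ i, act L rep h φ (j i)) g₀
    have hDelta : DeltaSq L μ rep m θ φ = ∑ j : Fin m → Fin L,
        (∫ g, ((∏ i, act L rep g θ (j i)) - ∏ i, act L rep g φ' (j i)) ∂μ) ^ 2 := by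
      unfold DeltaSq
      refine Finset.sum_congr rfl fun j _ => ?_
      rw [← hswap j, integral_sub (hint θ j) (hint φ' j)]
    -- pointwise bound
    have hρ' : nrm (θ - φ') ≤ 1/3 := by rw [← hattain]; exact hρ
    have hpt : ∀ g : G, (∑ j : Fin m → Fin L,
        ((∏ i, act L rep g θ (j i)) - ∏ i, act L rep g φ' (j i)) ^ 2) ≤
        12 * 2 ^ m * (rhoG L rep θ φ) ^ 2 := by
      intro g
      have h1 : nrm (act L rep g θ) = 1 := by rw [act_nrm]; exact hθ
      have h2 : nrm (act L rep g θ - act L rep g φ') = nrm (θ - φ') := by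
        rw [← act_sub, act_nrm]
      have h3 := (detCore m (act L rep g θ) (act L rep g φ') h1 (by rw [h2]; exact hρ')).2
      rw [h2, ← hattain] at h3
      exact h3
    -- assemble
    rw [hDelta]
    have hcont : ∀ j : Fin m → Fin L, Continuous fun g =>
        (∏ i, act L rep g θ (j i)) - ∏ i, act L rep g φ' (j i) := fun j =>
      (hprodc θ j).sub (hprodc φ' j)
    calc (∑ j : Fin m → Fin L,
        (∫ g, ((∏ i, act L rep g θ (j i)) - ∏ i, act L rep g φ' (j i)) ∂μ) ^ 2)
        ≤ ∑ j : Fin m → Fin L,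
          ∫ g, ((∏ i, act L rep g θ (j i)) - ∏ i, act L rep g φ' (j i)) ^ 2 ∂μ :=
          Finset.sum_le_sum fun j _ => jensen _ (hcont j)
      _ = ∫ g, ∑ j : Fin m → Fin L,
          ((∏ i, act L rep g θ (j i)) - ∏ i, act L rep g φ' (j i)) ^ 2 ∂μ :=
          (integral_finset_sum _ fun j _ =>
            ((hcont j).pow 2).integrable_of_hasCompactSupport (hcs _)).symm
      _ ≤ ∫ _, 12 * 2 ^ m * (rhoG L rep θ φ) ^ 2 ∂μ := by
          apply integral_mono
          · exact integrable_finset_sum _ fun j _ =>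
              ((hcont j).pow 2).integrable_of_hasCompactSupport (hcs _)
          · exact integrable_const _
          · exact hpt
      _ = 12 * 2 ^ m * (rhoG L rep θ φ) ^ 2 := by
          simp [integral_const, measure_univ]
  · -- deterministic part
    intro _ hε
    exact detCore m θ φ hθ hε
end
end

section
/- Second moment tensor separation: For all θ, φ ∈ ℝ^L, the second moment tensor difference Δ₂ = E[(Gθ)^{⊗2}] − E[(Gφ)^{⊗2}] satisfies ‖Δ₂‖² ≥ (1/L)(‖θ‖² − ‖φ‖²)². Moreover, if ‖φ‖ ≥ 3‖θ‖, then ‖Δ₂‖² ≥ (1/(4L)) ‖θ − φ‖⁴. -/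
open MeasureTheory Real Finset

noncomputable section

section Aux
open Matrix

lemma act_norm_sq' (L : ℕ) {G : Type} [Group G] (rep : G →* Matrix.orthogonalGroup (Fin L) ℝ)
    (g : G) (θ : Fin L → ℝ) : ∑ i, act L rep g θ i ^ 2 = ∑ i, θ i ^ 2 := by
  have hM : star (rep g : Matrix (Fin L) (Fin L) ℝ) * (rep g : Matrix (Fin L) (Fin L) ℝ) = 1 :=
    (Matrix.mem_orthogonalGroup_iff' (Fin L) ℝ).mp (rep g).2
  set M := (rep g : Matrix (Fin L) (Fin L) ℝ)
  have key : ∀ v : Fin L → ℝ, ∑ i, v i ^ 2 = v ⬝ᵥ v := by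
    intro v; simp [dotProduct, sq]
  rw [show (∑ i, act L rep g θ i ^ 2) = M.mulVec θ ⬝ᵥ M.mulVec θ from key _, key]
  rw [Matrix.dotProduct_mulVec, ← Matrix.mulVec_transpose, Matrix.mulVec_mulVec]
  have h2 : Mᵀ = star M := by
    ext i k; simp [Matrix.star_eq_conjTranspose, Matrix.conjTranspose_apply]
  rw [h2, hM, Matrix.one_mulVec]

lemma act_cont' (L : ℕ) {G : Type} [Group G] [TopologicalSpace G]
    (rep : G →* Matrix.orthogonalGroup (Fin L) ℝ)
    (hrep : Continuous fun g : G => (rep g : Matrix (Fin L) (Fin L) ℝ))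
    (θ : Fin L → ℝ) (i : Fin L) : Continuous fun g => act L rep g θ i := by
  unfold act Matrix.mulVec dotProduct
  exact continuous_finset_sum _ fun k _ =>
    (((continuous_apply k).comp ((continuous_apply i).comp hrep)).mul continuous_const)

end Aux

set_option maxHeartbeats 1000000 in
/-- **Lemma (second moment tensor separation).**
For all `θ, φ ∈ ℝ^L`, `‖Δ₂‖² ≥ (1/L)(‖θ‖² - ‖φ‖²)²`, and if moreover `‖φ‖ ≥ 3‖θ‖`, then
`‖Δ₂‖² ≥ ‖θ - φ‖⁴/(4L)`, where `Δ₂ = E[(Gθ)^{⊗2}] - E[(Gφ)^{⊗2}]`. -/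
theorem second_moment_tensor_separation
    (L : ℕ) (hL : 0 < L) (G : Type) [Group G] [TopologicalSpace G] [IsTopologicalGroup G]
    [CompactSpace G] [MeasurableSpace G] [BorelSpace G]
    (μ : Measure G) [IsProbabilityMeasure μ] [μ.IsHaarMeasure]
    (rep : G →* Matrix.orthogonalGroup (Fin L) ℝ)
    (hrep : Continuous fun g : G => (rep g : Matrix (Fin L) (Fin L) ℝ))
    (θ φ : Fin L → ℝ) :
    (1 / (L : ℝ)) * ((nrm θ) ^ 2 - (nrm φ) ^ 2) ^ 2 ≤ DeltaSq L μ rep 2 θ φ ∧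
    (3 * nrm θ ≤ nrm φ →
      (1 / (4 * (L : ℝ))) * (nrm (θ - φ)) ^ 4 ≤ DeltaSq L μ rep 2 θ φ) := by
  classical
  -- integrability of products of coordinates of the action
  have hInt : ∀ (ψ : Fin L → ℝ) (a b : Fin L),
      Integrable (fun g => act L rep g ψ a * act L rep g ψ b) μ := by
    intro ψ a b
    have hc : Continuous (fun g => act L rep g ψ a * act L rep g ψ b) :=
      (act_cont' L rep hrep ψ a).mul (act_cont' L rep hrep ψ b)
    exact hc.integrable_of_hasCompactSupport (HasCompactSupport.of_compactSpace _)
  set T : Fin L → Fin L → ℝ := fun a b =>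
    (∫ g, act L rep g θ a * act L rep g θ b ∂μ) -
    (∫ g, act L rep g φ a * act L rep g φ b ∂μ) with hT
  have hDelta : DeltaSq L μ rep 2 θ φ = ∑ a : Fin L, ∑ b : Fin L, (T a b) ^ 2 := by
    rw [DeltaSq]
    have e1 : ∀ j : Fin 2 → Fin L,
        ((∫ g, ∏ i, act L rep g θ (j i) ∂μ) - (∫ g, ∏ i, act L rep g φ (j i) ∂μ)) ^ 2
          = (T (j 0) (j 1)) ^ 2 := by
      intro j; simp [Fin.prod_univ_two, hT]
    rw [Finset.sum_congr rfl (fun j _ => e1 j)]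
    have := Fintype.sum_equiv (piFinTwoEquiv fun _ => Fin L)
      (fun j => (T (j 0) (j 1)) ^ 2) (fun p => (T p.1 p.2) ^ 2) (fun j => by simp)
    rw [this, Fintype.sum_prod_type]
  -- trace identity
  have hsq : ∀ v : Fin L → ℝ, (nrm v) ^ 2 = ∑ i, v i ^ 2 := fun v =>
    Real.sq_sqrt (Finset.sum_nonneg fun i _ => sq_nonneg _)
  have htraceψ : ∀ ψ : Fin L → ℝ,
      (∑ a : Fin L, ∫ g, act L rep g ψ a * act L rep g ψ a ∂μ) = (nrm ψ) ^ 2 := by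
    intro ψ
    rw [← integral_finset_sum _ (fun a _ => hInt ψ a a)]
    have : ∀ g : G, (∑ a : Fin L, act L rep g ψ a * act L rep g ψ a) = (nrm ψ) ^ 2 := by
      intro g
      rw [hsq, ← act_norm_sq' L rep g ψ]
      exact Finset.sum_congr rfl fun a _ => (sq (act L rep g ψ a)).symm
    rw [integral_congr_ae (Filter.Eventually.of_forall this)]
    simp
  have htrace : (∑ a : Fin L, T a a) = (nrm θ) ^ 2 - (nrm φ) ^ 2 := by
    rw [hT]
    rw [Finset.sum_sub_distrib, htraceψ θ, htraceψ φ]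
  -- Cauchy-Schwarz on the diagonal
  have hcs : ((nrm θ) ^ 2 - (nrm φ) ^ 2) ^ 2 ≤ (L : ℝ) * ∑ a : Fin L, (T a a) ^ 2 := by
    rw [← htrace]
    have := sq_sum_le_card_mul_sum_sq (s := (Finset.univ : Finset (Fin L)))
      (f := fun a => T a a)
    simpa using this
  have hdiag : (∑ a : Fin L, (T a a) ^ 2) ≤ ∑ a : Fin L, ∑ b : Fin L, (T a b) ^ 2 :=
    Finset.sum_le_sum fun a _ =>
      Finset.single_le_sum (fun b _ => sq_nonneg (T a b)) (Finset.mem_univ a)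
  have hLpos : (0 : ℝ) < L := Nat.cast_pos.mpr hL
  have main : (1 / (L : ℝ)) * ((nrm θ) ^ 2 - (nrm φ) ^ 2) ^ 2 ≤ DeltaSq L μ rep 2 θ φ := by
    rw [hDelta]
    rw [div_mul_eq_mul_div, one_mul, div_le_iff₀ hLpos]
    calc ((nrm θ) ^ 2 - (nrm φ) ^ 2) ^ 2 ≤ (L : ℝ) * ∑ a : Fin L, (T a a) ^ 2 := hcs
      _ ≤ (∑ a : Fin L, ∑ b : Fin L, (T a b) ^ 2) * (L : ℝ) := by
          rw [mul_comm]; exact mul_le_mul_of_nonneg_right hdiag hLpos.le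
  refine ⟨main, fun h3 => ?_⟩
  -- triangle-type bound: nrm (θ - φ) ≤ nrm θ + nrm φ
  set a := nrm θ with ha
  set b := nrm φ with hb
  set d := nrm (θ - φ) with hd
  have ha0 : 0 ≤ a := Real.sqrt_nonneg _
  have hb0 : 0 ≤ b := Real.sqrt_nonneg _
  have hd0 : 0 ≤ d := Real.sqrt_nonneg _
  have hdot : (∑ i, θ i * φ i) ^ 2 ≤ (∑ i, θ i ^ 2) * (∑ i, φ i ^ 2) :=
    Finset.sum_mul_sq_le_sq_mul_sq Finset.univ θ φ
  have hdsq : d ^ 2 = a ^ 2 + b ^ 2 - 2 * ∑ i, θ i * φ i := by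
    rw [hd, hsq, ha, hsq, hb, hsq]
    have : ∀ i, (θ - φ) i ^ 2 = θ i ^ 2 + φ i ^ 2 - 2 * (θ i * φ i) := by
      intro i; simp [Pi.sub_apply]; ring
    rw [Finset.sum_congr rfl fun i _ => this i]
    rw [Finset.sum_sub_distrib, Finset.sum_add_distrib, ← Finset.mul_sum]
  have hab : (∑ i, θ i * φ i) ^ 2 ≤ (a * b) ^ 2 := by
    rw [mul_pow, ha, hsq, hb, hsq]; exact hdot
  have habs : |∑ i, θ i * φ i| ≤ a * b := by
    have h := Real.sqrt_le_sqrt hab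
    rwa [Real.sqrt_sq_eq_abs, Real.sqrt_sq_eq_abs, abs_of_nonneg (mul_nonneg ha0 hb0)] at h
  have htri : d ^ 2 ≤ (a + b) ^ 2 := by
    have := neg_abs_le (∑ i, θ i * φ i)
    nlinarith
  have k2 : (a + b) ^ 2 ≤ 4 * (b - a) ^ 2 := by
    have hx : (0:ℝ) ≤ (b - 3 * a) * (3 * b - a) :=
      mul_nonneg (by linarith) (by linarith)
    nlinarith [hx]
  have key : (d ^ 2) ^ 2 ≤ 4 * (a ^ 2 - b ^ 2) ^ 2 := by
    have k1 : (d ^ 2) ^ 2 ≤ ((a + b) ^ 2) ^ 2 := pow_le_pow_left₀ (sq_nonneg d) htri 2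
    have k3 := mul_le_mul_of_nonneg_right k2 (sq_nonneg (a + b))
    nlinarith [k1, k3]
  have h4 : d ^ 4 = (d ^ 2) ^ 2 := by ring
  calc (1 / (4 * (L : ℝ))) * d ^ 4 ≤ (1 / (L : ℝ)) * ((a) ^ 2 - (b) ^ 2) ^ 2 := by
        rw [h4]
        rw [div_mul_eq_mul_div, one_mul, div_mul_eq_mul_div, one_mul,
          div_le_div_iff₀ (by positivity) hLpos]
        nlinarith [key, hLpos]
    _ ≤ DeltaSq L μ rep 2 θ φ := main
end
end
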